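/- arXiv:1611.08752 — 4 statements merged into one kernel-verified Lean document; each statement's English description precedes it below -/
import Mathlib

section
/- Let n ≥ 16, let v_1, …, v_m ∈ ℝ^n be unit vectors, let x⁰ ∈ [-1,1]^n, and let λ_1 ≥ λ_2 ≥ … ≥ λ_m ≥ 0 be real parameters satisfying ∑_{i=1}^m exp(-λ_i²/16) ≤ n/32. Then there exists a point x ∈ [-1,1]^n such that ⟨v_i, x - x⁰⟩ ≤ 11·λ_i for every i ∈ {1,…,m} and at least n/2 of the coordinates of x lie in {-1, 1}. -/
/-!
Derandomized Lovett–Meka walk. Starting from `x⁰`, move inside the polytope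
`{x ∈ [-1,1]ⁿ | ⟪v i, x - x⁰⟫ ≤ 11 λ_i}` along unit directions `w` orthogonal to the frozen
coordinates (`x j = ±1`) and to the tight constraints, going as far as possible, but at most
`1/√n`, both along `w` and along `-w`. With `σ i` the variance `∑ ⟪v i, w⟫² / n` accumulated so
far, each term `exp (-λ_i²/16 + s_i ⟪v i, x - x⁰⟫ - s_i² σ i)` (`s_i = 11 λ_i / 36`) is a
supermartingale for the two-point step, while `‖x‖²` grows by the step variance; so one of the two
endpoints does not increase the potential `Φ + (C/n - ‖x‖²)/32`, where `Φ` is the sum of these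
terms and `C` counts the full-length steps.

Keeping the potential below `n/32` bounds `C` by `2n²`, and since a tight constraint has barrier
term at least `1`, at most `n/16` constraints are tight. Each step makes a full step, freezes a
coordinate or makes a constraint tight, so the walk reaches `n/2` frozen coordinates. A direction
chosen by averaging over an orthonormal basis of the free subspace (of dimension `≥ n/4`) makes
`∑ exp (n σ i)` grow by a factor at most `1 + 8/n` per step, which keeps every `σ i ≤ 33`; that is
what makes the barrier term of a constraint becoming tight at least `1`.
-/

open Real Finset Module
open scoped RealInnerProductSpace

lemma exp_le_one_add_add_sq {z : ℝ} (hz : |z| ≤ 1) : exp z ≤ 1 + z + z ^ 2 := by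
  linarith [le_abs_self (exp z - 1 - z), abs_exp_sub_one_sub_id_le hz]

/-- The moment generating function of the centred two-point law on `{a, -b}`. -/
lemma two_point_mgf_le {a b g z : ℝ} (ha : 0 < a) (hb : 0 < b) (hag : a ≤ g) (hbg : b ≤ g)
    (hz : |z| * g ≤ 1) :
    b / (a + b) * exp (a * z) + a / (a + b) * exp (-(b * z)) ≤ exp (g ^ 2 * z ^ 2) := by
  have hza : |a * z| ≤ 1 := by
    rw [abs_mul, abs_of_pos ha]; nlinarith [abs_nonneg z]
  have hzb : |-(b * z)| ≤ 1 := by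
    rw [abs_neg, abs_mul, abs_of_pos hb]; nlinarith [abs_nonneg z]
  have hmean : b / (a + b) * (1 + a * z + (a * z) ^ 2)
      + a / (a + b) * (1 + -(b * z) + (-(b * z)) ^ 2) = 1 + a * b * z ^ 2 := by
    field_simp; ring
  calc b / (a + b) * exp (a * z) + a / (a + b) * exp (-(b * z))
      ≤ b / (a + b) * (1 + a * z + (a * z) ^ 2)
        + a / (a + b) * (1 + -(b * z) + (-(b * z)) ^ 2) := by
        gcongr
        exacts [exp_le_one_add_add_sq hza, exp_le_one_add_add_sq hzb]
    _ = 1 + a * b * z ^ 2 := hmean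
    _ ≤ g ^ 2 * z ^ 2 + 1 := by
        nlinarith [mul_le_mul hag hbg hb.le (ha.le.trans hag), sq_nonneg z]
    _ ≤ exp (g ^ 2 * z ^ 2) := add_one_le_exp _

lemma two_point_indicator_average_le {a b g : ℝ} (ha : 0 < a) (hb : 0 < b) (hag : a ≤ g)
    (hbg : b ≤ g) :
    b / (a + b) * (if a = g then 1 else 0) + a / (a + b) * (if b = g then 1 else 0)
      ≤ a * b / g ^ 2 := by
  have hg : 0 < g := ha.trans_le hag
  rw [le_div_iff₀ (by positivity)]
  split_ifs with hga hgb hgb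
  · subst hga hgb; field_simp; rfl
  · subst hga
    rw [mul_one, mul_zero, add_zero, div_mul_eq_mul_div, div_le_iff₀ (by positivity)]
    nlinarith [mul_pos ha hb]
  · subst hgb
    rw [mul_one, mul_zero, zero_add, div_mul_eq_mul_div, div_le_iff₀ (by positivity)]
    nlinarith [mul_pos ha hb]
  · simp only [mul_zero, add_zero, zero_mul]; positivity

lemma two_point_norm_sq_average {E : Type*} [NormedAddCommGroup E] [InnerProductSpace ℝ E]
    (x u : E) {a b : ℝ} (hab : 0 < a + b) :
    b / (a + b) * ‖x + a • u‖ ^ 2 + a / (a + b) * ‖x + b • -u‖ ^ 2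
      = ‖x‖ ^ 2 + a * b * ‖u‖ ^ 2 := by
  simp only [norm_add_sq_real, inner_smul_right, inner_neg_right, norm_smul, norm_neg,
    mul_pow, Real.norm_eq_abs, sq_abs]
  field_simp
  ring

lemma EuclideanSpace.norm_sq_le_of_abs_le {ι : Type*} [Fintype ι] {x : EuclideanSpace ℝ ι}
    {c : ℝ} (h : ∀ j, |x j| ≤ c) : ‖x‖ ^ 2 ≤ Fintype.card ι * c ^ 2 := by
  rw [EuclideanSpace.norm_sq_eq, ← nsmul_eq_mul, ← Finset.card_univ]
  refine Finset.sum_le_card_nsmul _ _ _ fun j _ => ?_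
  rw [Real.norm_eq_abs, sq_abs]
  exact sq_le_sq' (neg_le_of_abs_le (h j)) (le_of_abs_le (h j))

lemma exists_unit_mem_finrank_mul_sum_le {E ι : Type*} [NormedAddCommGroup E]
    [InnerProductSpace ℝ E] (U : Submodule ℝ E) [FiniteDimensional ℝ U]
    (hU : 0 < finrank ℝ U) (s : Finset ι) {c : ι → ℝ} (hc : ∀ i ∈ s, 0 ≤ c i) (u : ι → E) :
    ∃ w ∈ U, ‖w‖ = 1 ∧ finrank ℝ U * ∑ i ∈ s, c i * ⟪u i, w⟫ ^ 2 ≤ ∑ i ∈ s, c i * ‖u i‖ ^ 2 := by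
  set e : Fin (finrank ℝ U) → E := U.subtypeₗᵢ ∘ stdOrthonormalBasis ℝ U
  have he : Orthonormal ℝ e := (stdOrthonormalBasis ℝ U).orthonormal.comp_linearIsometry _
  set f : Fin (finrank ℝ U) → ℝ := fun k => ∑ i ∈ s, c i * ⟪u i, e k⟫ ^ 2
  obtain ⟨k, -, hk⟩ := Finset.exists_min_image univ f ⟨⟨0, hU⟩, mem_univ _⟩
  refine ⟨e k, (stdOrthonormalBasis ℝ U k).2, he.1 k, ?_⟩
  have hbessel (i : ι) : ∑ k, ⟪u i, e k⟫ ^ 2 ≤ ‖u i‖ ^ 2 := by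
    simpa [real_inner_comm] using he.sum_inner_products_le (u i) (s := univ)
  calc (finrank ℝ U : ℝ) * f k = #(univ : Finset (Fin (finrank ℝ U))) • f k := by simp
    _ ≤ ∑ k, f k := card_nsmul_le_sum _ _ _ fun k' _ => hk k' (mem_univ _)
    _ = ∑ i ∈ s, c i * ∑ k, ⟪u i, e k⟫ ^ 2 := by
        simp only [f, Finset.mul_sum]; exact Finset.sum_comm
    _ ≤ ∑ i ∈ s, c i * ‖u i‖ ^ 2 := sum_le_sum fun i hi => by gcongr; exacts [hc i hi, hbessel i]

lemma exists_maximal_feasible_step {ι : Type*} [Fintype ι] {a b : ι → ℝ} {g : ℝ} (hg : 0 < g)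
    (ha : ∀ k, 0 ≤ a k) (hab : ∀ k, 0 < b k → 0 < a k) :
    ∃ t, 0 < t ∧ t ≤ g ∧ (∀ k, t * b k ≤ a k) ∧ (t = g ∨ ∃ k, 0 < b k ∧ t * b k = a k) := by
  classical
  set S := insert g ((univ.filter fun k => 0 < b k).image fun k => a k / b k)
  have hS : S.Nonempty := insert_nonempty _ _
  have hmem : ∀ k, 0 < b k → a k / b k ∈ S := fun k hk =>
    mem_insert_of_mem (mem_image_of_mem _ (mem_filter.2 ⟨mem_univ _, hk⟩))
  have hpos : 0 < S.min' hS := by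
    rw [Finset.lt_min'_iff]
    intro s hs
    rcases mem_insert.1 hs with rfl | hs
    · exact hg
    obtain ⟨k, hk, rfl⟩ := mem_image.1 hs
    have hk := (mem_filter.1 hk).2
    exact div_pos (hab k hk) hk
  refine ⟨S.min' hS, hpos, S.min'_le _ (mem_insert_self _ _), fun k => ?_, ?_⟩
  · rcases le_or_gt (b k) 0 with hk | hk
    · nlinarith [ha k]
    · exact (le_div_iff₀ hk).1 (S.min'_le _ (hmem k hk))
  · rcases mem_insert.1 (S.min'_mem hS) with h | h
    · exact Or.inl h
    obtain ⟨k, hk, h⟩ := mem_image.1 h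
    have hk := (mem_filter.1 hk).2
    exact Or.inr ⟨k, hk, by rw [← h]; field_simp⟩

lemma exists_of_bounded_progress {α : Type*} {p q : α → Prop} (μ : α → ℕ) (N : ℕ)
    (hbound : ∀ a, p a → μ a ≤ N) (hstep : ∀ a, p a → ¬ q a → ∃ b, p b ∧ μ a < μ b)
    {a : α} (ha : p a) : ∃ b, p b ∧ q b := by
  induction hk : N - μ a using Nat.strong_induction_on generalizing a with
  | _ k ih =>
    by_cases hq : q a
    · exact ⟨a, ha, hq⟩
    obtain ⟨b, hb, hab⟩ := hstep a ha hq
    exact ih (N - μ b) (by have := hbound b hb; omega) hb rfl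

lemma card_add_finrank_orthogonal_span_ge {E : Type*} [NormedAddCommGroup E]
    [InnerProductSpace ℝ E] [FiniteDimensional ℝ E] (A : Finset E) :
    finrank ℝ E ≤ #A + finrank ℝ (Submodule.span ℝ (A : Set E))ᗮ := by
  rw [← Submodule.finrank_add_finrank_orthogonal (Submodule.span ℝ (A : Set E))]
  gcongr
  exact finrank_span_finset_le_card A

noncomputable section

namespace PartialColoring

def stepSize (n : ℕ) : ℝ := 1 / √n

lemma stepSize_pos {n : ℕ} (hn : 0 < n) : 0 < stepSize n := by
  unfold stepSize; positivity

lemma stepSize_sq (n : ℕ) : stepSize n ^ 2 = 1 / n := by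
  rw [stepSize, div_pow, one_pow, sq_sqrt n.cast_nonneg]

def frozen {n : ℕ} (x : EuclideanSpace ℝ (Fin n)) : Finset (Fin n) := {j | x j = 1 ∨ x j = -1}

@[simp] lemma mem_frozen {n : ℕ} {x : EuclideanSpace ℝ (Fin n)} {j : Fin n} :
    j ∈ frozen x ↔ x j = 1 ∨ x j = -1 := by
  rw [frozen, mem_filter_univ]

lemma frozen_subset_add_smul {n : ℕ} {x u : EuclideanSpace ℝ (Fin n)}
    (hu : ∀ j ∈ frozen x, u j = 0) (t : ℝ) : frozen x ⊆ frozen (x + t • u) := by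
  intro j hj
  have huj := hu j hj
  rw [mem_frozen] at hj ⊢
  simpa [huj] using hj

structure Problem (n m : ℕ) where
  v : Fin m → EuclideanSpace ℝ (Fin n)
  x0 : EuclideanSpace ℝ (Fin n)
  lam : Fin m → ℝ

namespace Problem

variable {n m : ℕ} (P : Problem n m)

/-- Outside `active` the constraint holds on the whole cube, where `‖x - x⁰‖ ≤ 2√n`. -/
def active : Finset (Fin m) := {i | 121 * P.lam i ^ 2 ≤ 4 * n}

def disc (x : EuclideanSpace ℝ (Fin n)) (i : Fin m) : ℝ := ⟪P.v i, x - P.x0⟫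

def tilt (i : Fin m) : ℝ := 11 * P.lam i / 36

def barrier (x : EuclideanSpace ℝ (Fin n)) (σ : Fin m → ℝ) (i : Fin m) : ℝ :=
  exp (-P.lam i ^ 2 / 16 + P.tilt i * P.disc x i - P.tilt i ^ 2 * σ i)

def barrierSum (x : EuclideanSpace ℝ (Fin n)) (σ : Fin m → ℝ) : ℝ :=
  ∑ i ∈ P.active, P.barrier x σ i

def varianceSum (σ : Fin m → ℝ) : ℝ := ∑ i ∈ P.active, exp (n * σ i)

def varianceForm (σ : Fin m → ℝ) (u : EuclideanSpace ℝ (Fin n)) : ℝ :=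
  ∑ i ∈ P.active, exp (n * σ i) * ⟪P.v i, u⟫ ^ 2

def potential (x : EuclideanSpace ℝ (Fin n)) (σ : Fin m → ℝ) (C : ℕ) : ℝ :=
  P.barrierSum x σ + ((C : ℝ) / n - ‖x‖ ^ 2) / 32

def addVar (σ : Fin m → ℝ) (u : EuclideanSpace ℝ (Fin n)) : Fin m → ℝ :=
  fun i => σ i + ⟪P.v i, u⟫ ^ 2 / n

def tight (x : EuclideanSpace ℝ (Fin n)) : Finset (Fin m) :=
  {i ∈ P.active | P.disc x i = 11 * P.lam i}

def progress (x : EuclideanSpace ℝ (Fin n)) (C : ℕ) : ℕ := C + #(frozen x) + #(P.tight x)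

structure IsFreeDirection (x u : EuclideanSpace ℝ (Fin n)) : Prop where
  apply_frozen : ∀ j ∈ frozen x, u j = 0
  inner_tight : ∀ i ∈ P.tight x, ⟪P.v i, u⟫ = 0

structure Invariant (x : EuclideanSpace ℝ (Fin n)) (σ : Fin m → ℝ) (C : ℕ) : Prop where
  mem_cube : ∀ j, x j ∈ Set.Icc (-1 : ℝ) 1
  disc_le : ∀ i ∈ P.active, P.disc x i ≤ 11 * P.lam i
  one_le_barrier : ∀ i ∈ P.tight x, 1 ≤ P.barrier x σ i
  potential_le : P.potential x σ C ≤ n / 32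
  varianceSum_le : P.varianceSum σ ≤ #P.active * exp (8 * P.progress x C / n)

variable {P}

@[simp] lemma mem_tight {x : EuclideanSpace ℝ (Fin n)} {i : Fin m} :
    i ∈ P.tight x ↔ i ∈ P.active ∧ P.disc x i = 11 * P.lam i := by
  rw [tight, mem_filter]

lemma IsFreeDirection.neg {x u : EuclideanSpace ℝ (Fin n)} (hu : P.IsFreeDirection x u) :
    P.IsFreeDirection x (-u) where
  apply_frozen j hj := by simp [hu.apply_frozen j hj]
  inner_tight i hi := by rw [inner_neg_right, hu.inner_tight i hi, neg_zero]

lemma addVar_neg (σ : Fin m → ℝ) (u : EuclideanSpace ℝ (Fin n)) :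
    P.addVar σ (-u) = P.addVar σ u := by
  funext i; simp [addVar]

lemma varianceForm_neg (σ : Fin m → ℝ) (u : EuclideanSpace ℝ (Fin n)) :
    P.varianceForm σ (-u) = P.varianceForm σ u := by
  simp [varianceForm]

lemma disc_add_smul (x u : EuclideanSpace ℝ (Fin n)) (t : ℝ) (i : Fin m) :
    P.disc (x + t • u) i = P.disc x i + t * ⟪P.v i, u⟫ := by
  rw [disc, disc, add_sub_right_comm, inner_add_right, real_inner_smul_right]

lemma tight_subset_add_smul {x u : EuclideanSpace ℝ (Fin n)}
    (hu : ∀ i ∈ P.tight x, ⟪P.v i, u⟫ = 0) (t : ℝ) : P.tight x ⊆ P.tight (x + t • u) := by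
  intro i hi
  have hui := hu i hi
  rw [mem_tight] at hi ⊢
  simpa [disc_add_smul, hui] using hi

lemma abs_tilt_mul_stepSize_le_one {i : Fin m} (hi : i ∈ P.active) :
    |P.tilt i| * stepSize n ≤ 1 := by
  have hi : 121 * P.lam i ^ 2 ≤ 4 * n := by simpa [active] using hi
  refine (pow_le_one_iff_of_nonneg (by unfold stepSize; positivity) two_ne_zero).1 ?_
  rw [mul_pow, sq_abs, stepSize_sq, tilt, mul_one_div]
  rcases Nat.eq_zero_or_pos n with rfl | hn
  · simp
  · rw [div_le_one (by positivity)]; nlinarith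

lemma barrier_add_smul_addVar (x u : EuclideanSpace ℝ (Fin n)) (σ : Fin m → ℝ) (t : ℝ)
    (i : Fin m) :
    P.barrier (x + t • u) (P.addVar σ u) i
      = P.barrier x σ i * exp (t * (P.tilt i * ⟪P.v i, u⟫)
          - stepSize n ^ 2 * (P.tilt i * ⟪P.v i, u⟫) ^ 2) := by
  rw [barrier, barrier, ← exp_add, disc_add_smul, addVar, stepSize_sq]
  congr 1
  ring

lemma one_le_barrier_of_disc_eq {x : EuclideanSpace ℝ (Fin n)} {σ : Fin m → ℝ} {i : Fin m}
    (h : P.disc x i = 11 * P.lam i) (hσ : σ i ≤ 34) : 1 ≤ P.barrier x σ i := by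
  rw [barrier, h, tilt, one_le_exp_iff]
  -- the exponent is `λ_i² (-1/16 + 121/36 - 121 σ_i / 1296)` and `121 · 34 < 4356 - 81`
  nlinarith [sq_nonneg (P.lam i)]

lemma barrierSum_nonneg (x : EuclideanSpace ℝ (Fin n)) (σ : Fin m → ℝ) :
    0 ≤ P.barrierSum x σ :=
  sum_nonneg fun _ _ => (exp_pos _).le

lemma card_active_mul_exp_le (hsum : ∑ i, exp (-P.lam i ^ 2 / 16) ≤ n / 32) :
    #P.active * exp (-n / 484) ≤ n / 32 := by
  calc #P.active * exp (-n / 484) = ∑ i ∈ P.active, exp (-n / 484) := by simp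
    _ ≤ ∑ i ∈ P.active, exp (-P.lam i ^ 2 / 16) := sum_le_sum fun i hi => by
        have : 121 * P.lam i ^ 2 ≤ 4 * n := by simpa [active] using hi
        exact exp_le_exp.2 (by linarith)
    _ ≤ ∑ i, exp (-P.lam i ^ 2 / 16) :=
        sum_le_sum_of_subset_of_nonneg (subset_univ _) fun _ _ _ => (exp_pos _).le
    _ ≤ n / 32 := hsum

lemma card_active_le_exp (hsum : ∑ i, exp (-P.lam i ^ 2 / 16) ≤ n / 32) :
    (#P.active : ℝ) ≤ exp (n / 32 + n / 484) := by
  calc (#P.active : ℝ) = #P.active * exp (-n / 484) * exp (n / 484) := by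
        rw [mul_assoc, ← exp_add, neg_div, neg_add_cancel, exp_zero, mul_one]
    _ ≤ n / 32 * exp (n / 484) := by gcongr; exact card_active_mul_exp_le hsum
    _ ≤ exp (n / 32) * exp (n / 484) := by gcongr; linarith [add_one_le_exp (n / 32 : ℝ)]
    _ = exp (n / 32 + n / 484) := (exp_add _ _).symm

lemma inner_sq_le_one (hv : ∀ i, ‖P.v i‖ = 1) {u : EuclideanSpace ℝ (Fin n)} (hu : ‖u‖ = 1)
    (i : Fin m) : ⟪P.v i, u⟫ ^ 2 ≤ 1 := by
  rw [sq_le_one_iff_abs_le_one]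
  simpa [hv, hu] using abs_real_inner_le_norm (P.v i) u

lemma barrierSum_average_le (hv : ∀ i, ‖P.v i‖ = 1) {w : EuclideanSpace ℝ (Fin n)}
    (hw : ‖w‖ = 1) (x : EuclideanSpace ℝ (Fin n)) (σ : Fin m → ℝ) {tp tm : ℝ} (htp : 0 < tp)
    (htm : 0 < tm) (htpγ : tp ≤ stepSize n) (htmγ : tm ≤ stepSize n) :
    tm / (tp + tm) * P.barrierSum (x + tp • w) (P.addVar σ w)
      + tp / (tp + tm) * P.barrierSum (x + tm • -w) (P.addVar σ w) ≤ P.barrierSum x σ := by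
  rw [barrierSum, barrierSum, barrierSum, mul_sum, mul_sum, ← sum_add_distrib]
  refine sum_le_sum fun i hi => ?_
  rw [barrier_add_smul_addVar, ← addVar_neg, barrier_add_smul_addVar]
  set z := P.tilt i * ⟪P.v i, w⟫ with hzdef
  set γ := stepSize n
  have hz : |z| * γ ≤ 1 := by
    have hb : |⟪P.v i, w⟫| ≤ 1 := (sq_le_one_iff_abs_le_one _).1 (inner_sq_le_one hv hw i)
    calc |z| * γ = |P.tilt i| * γ * |⟪P.v i, w⟫| := by rw [abs_mul]; ring
      _ ≤ 1 * 1 := mul_le_mul (abs_tilt_mul_stepSize_le_one hi) hb (abs_nonneg _) zero_le_one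
      _ = 1 := one_mul 1
  have hplus : exp (tp * z - γ ^ 2 * z ^ 2) = exp (tp * z) * exp (-(γ ^ 2 * z ^ 2)) := by
    rw [← exp_add, sub_eq_add_neg]
  have hminus : exp (tm * (P.tilt i * ⟪P.v i, -w⟫) - γ ^ 2 * (P.tilt i * ⟪P.v i, -w⟫) ^ 2)
      = exp (-(tm * z)) * exp (-(γ ^ 2 * z ^ 2)) := by
    rw [← exp_add, inner_neg_right, mul_neg, ← hzdef]
    ring_nf
  rw [hplus, hminus]
  calc _ = P.barrier x σ i * exp (-(γ ^ 2 * z ^ 2))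
        * (tm / (tp + tm) * exp (tp * z) + tp / (tp + tm) * exp (-(tm * z))) := by ring
    _ ≤ P.barrier x σ i * exp (-(γ ^ 2 * z ^ 2)) * exp (γ ^ 2 * z ^ 2) :=
        mul_le_mul_of_nonneg_left (two_point_mgf_le htp htm htpγ htmγ hz)
          (mul_pos (exp_pos _) (exp_pos _)).le
    _ = P.barrier x σ i := by rw [mul_assoc, ← exp_add, neg_add_cancel, exp_zero, mul_one]

lemma potential_average_le (hn : 0 < n) (hv : ∀ i, ‖P.v i‖ = 1) {w : EuclideanSpace ℝ (Fin n)}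
    (hw : ‖w‖ = 1) (x : EuclideanSpace ℝ (Fin n)) (σ : Fin m → ℝ) (C : ℕ) {tp tm : ℝ}
    (htp : 0 < tp) (htm : 0 < tm) (htpγ : tp ≤ stepSize n) (htmγ : tm ≤ stepSize n) :
    tm / (tp + tm) * P.potential (x + tp • w) (P.addVar σ w) (C + if tp = stepSize n then 1 else 0)
      + tp / (tp + tm) * P.potential (x + tm • -w) (P.addVar σ w)
          (C + if tm = stepSize n then 1 else 0)
      ≤ P.potential x σ C := by
  have hΦ := barrierSum_average_le hv hw x σ htp htm htpγ htmγ
  have hnorm := two_point_norm_sq_average x w (by linarith : 0 < tp + tm)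
  have hind := two_point_indicator_average_le htp htm htpγ htmγ
  rw [hw, one_pow, mul_one] at hnorm
  rw [stepSize_sq, div_div_eq_mul_div, div_one] at hind
  have hind' : (tm / (tp + tm) * (if tp = stepSize n then 1 else 0)
      + tp / (tp + tm) * (if tm = stepSize n then 1 else 0)) / n ≤ tp * tm := by
    rw [div_le_iff₀ (by positivity)]; exact hind
  have hpq : tm / (tp + tm) + tp / (tp + tm) = 1 := by
    rw [← add_div, add_comm tm, div_self (by positivity)]
  unfold potential
  push_cast
  linear_combination hΦ + (C / n / 32 : ℝ) * hpq + hind' / 32 - hnorm / 32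

lemma varianceSum_addVar_le (hn : 0 < n) (hv : ∀ i, ‖P.v i‖ = 1) {u : EuclideanSpace ℝ (Fin n)}
    (hu : ‖u‖ = 1) {σ : Fin m → ℝ} (hquad : n / 4 * P.varianceForm σ u ≤ P.varianceSum σ) :
    P.varianceSum (P.addVar σ u) ≤ (1 + 8 / n) * P.varianceSum σ := by
  have hterm (i : Fin m) :
      exp (n * P.addVar σ u i) ≤ exp (n * σ i) + 2 * (exp (n * σ i) * ⟪P.v i, u⟫ ^ 2) := by
    have hb := inner_sq_le_one hv hu i
    have hb0 := sq_nonneg ⟪P.v i, u⟫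
    have hexp := exp_le_one_add_add_sq (abs_le.2 ⟨by linarith, hb⟩)
    have hsplit : exp (n * P.addVar σ u i) = exp (n * σ i) * exp (⟪P.v i, u⟫ ^ 2) := by
      rw [← exp_add, addVar]; field_simp
    have hexp' : exp (⟪P.v i, u⟫ ^ 2) ≤ 1 + 2 * ⟪P.v i, u⟫ ^ 2 := by nlinarith
    calc exp (n * P.addVar σ u i) = exp (n * σ i) * exp (⟪P.v i, u⟫ ^ 2) := hsplit
      _ ≤ exp (n * σ i) * (1 + 2 * ⟪P.v i, u⟫ ^ 2) := by gcongr
      _ = _ := by ring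
  calc P.varianceSum (P.addVar σ u) ≤ P.varianceSum σ + 2 * P.varianceForm σ u := by
        rw [varianceSum, varianceSum, varianceForm, mul_sum, ← sum_add_distrib]
        exact sum_le_sum fun i _ => hterm i
    _ ≤ (1 + 8 / n) * P.varianceSum σ := by
        have h : 2 * P.varianceForm σ u ≤ 8 / n * P.varianceSum σ := by
          rw [div_mul_eq_mul_div, le_div_iff₀ (by positivity)]
          linarith
        linarith

lemma disc_le_of_notMem_active (hv : ∀ i, ‖P.v i‖ = 1) (hlam : ∀ i, 0 ≤ P.lam i)
    (hx0 : ∀ j, P.x0 j ∈ Set.Icc (-1 : ℝ) 1) {x : EuclideanSpace ℝ (Fin n)}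
    (hx : ∀ j, x j ∈ Set.Icc (-1 : ℝ) 1) {i : Fin m} (hi : i ∉ P.active) :
    P.disc x i ≤ 11 * P.lam i := by
  have hi : 4 * n < 121 * P.lam i ^ 2 := by simpa [active] using hi
  have hdist : ‖x - P.x0‖ ^ 2 ≤ n * 2 ^ 2 := by
    simpa using EuclideanSpace.norm_sq_le_of_abs_le (x := x - P.x0) (c := 2) fun j => by
      rw [PiLp.sub_apply, abs_le]
      constructor <;> linarith [(hx j).1, (hx j).2, (hx0 j).1, (hx0 j).2]
  have hnorm : ‖x - P.x0‖ ≤ 11 * P.lam i := by nlinarith [norm_nonneg (x - P.x0), hlam i]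
  calc P.disc x i ≤ ‖P.v i‖ * ‖x - P.x0‖ := real_inner_le_norm _ _
    _ ≤ 11 * P.lam i := by rw [hv i, one_mul]; exact hnorm

lemma progress_lt {x u : EuclideanSpace ℝ (Fin n)} {C : ℕ} (hu : P.IsFreeDirection x u) {t : ℝ}
    (h : t = stepSize n ∨ (∃ j ∉ frozen x, j ∈ frozen (x + t • u)) ∨
      ∃ i ∉ P.tight x, i ∈ P.tight (x + t • u)) :
    P.progress x C < P.progress (x + t • u) (C + if t = stepSize n then 1 else 0) := by
  have hF := frozen_subset_add_smul hu.apply_frozen t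
  have hT := tight_subset_add_smul hu.inner_tight t
  have hF' := card_le_card hF
  have hT' := card_le_card hT
  unfold progress
  rcases h with h | ⟨j, hj, hj'⟩ | ⟨i, hi, hi'⟩
  · rw [if_pos h]; omega
  · have := card_lt_card ((ssubset_iff_of_subset hF).2 ⟨j, hj', hj⟩)
    split_ifs <;> omega
  · have := card_lt_card ((ssubset_iff_of_subset hT).2 ⟨i, hi', hi⟩)
    split_ifs <;> omega

namespace Invariant

variable {x : EuclideanSpace ℝ (Fin n)} {σ : Fin m → ℝ} {C : ℕ}

lemma norm_sq_le (hI : P.Invariant x σ C) : ‖x‖ ^ 2 ≤ n := by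
  simpa using EuclideanSpace.norm_sq_le_of_abs_le (c := 1) fun j => abs_le.2 (hI.mem_cube j)

lemma barrierSum_add_le (hI : P.Invariant x σ C) : P.barrierSum x σ + C / n / 32 ≤ n / 16 := by
  have := hI.potential_le
  have := hI.norm_sq_le
  unfold potential at *
  linarith

lemma card_tight_le (hI : P.Invariant x σ C) : 16 * #(P.tight x) ≤ n := by
  have hT : (#(P.tight x) : ℝ) ≤ P.barrierSum x σ :=
    calc (#(P.tight x) : ℝ) = ∑ i ∈ P.tight x, 1 := by simp
      _ ≤ ∑ i ∈ P.tight x, P.barrier x σ i := sum_le_sum hI.one_le_barrier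
      _ ≤ P.barrierSum x σ :=
          sum_le_sum_of_subset_of_nonneg (filter_subset _ _) fun _ _ _ => (exp_pos _).le
  have := hI.barrierSum_add_le
  have : (0 : ℝ) ≤ C / n / 32 := by positivity
  exact_mod_cast (by linarith : (16 * #(P.tight x) : ℝ) ≤ n)

lemma fullSteps_le (hI : P.Invariant x σ C) (hn : 0 < n) : C ≤ 2 * n ^ 2 := by
  have := hI.barrierSum_add_le
  have := P.barrierSum_nonneg x σ
  have h : (C : ℝ) / n ≤ 2 * n := by linarith
  rw [div_le_iff₀ (by positivity)] at h
  exact_mod_cast (by linarith : (C : ℝ) ≤ 2 * n ^ 2)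

lemma progress_le (hI : P.Invariant x σ C) (hn : 0 < n) :
    P.progress x C ≤ 2 * n ^ 2 + 2 * n := by
  have := hI.fullSteps_le hn
  have := hI.card_tight_le
  have : #(frozen x) ≤ n := (card_le_univ _).trans_eq (Fintype.card_fin n)
  unfold progress
  omega

lemma var_le (hI : P.Invariant x σ C) (hn : 0 < n)
    (hsum : ∑ i, exp (-P.lam i ^ 2 / 16) ≤ n / 32) {i : Fin m} (hi : i ∈ P.active) : σ i ≤ 33 := by
  have hn' : (1 : ℝ) ≤ n := by exact_mod_cast hn
  have hprog : 8 * (P.progress x C : ℝ) / n ≤ 16 * n + 16 := by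
    have := (Nat.cast_le (α := ℝ)).2 (hI.progress_le hn)
    push_cast at this
    rw [div_le_iff₀ (by positivity)]
    nlinarith
  have h : exp (n * σ i) ≤ exp (n / 32 + n / 484 + (16 * n + 16)) :=
    calc exp (n * σ i) ≤ P.varianceSum σ :=
          single_le_sum (f := fun i => exp (n * σ i)) (fun _ _ => (exp_pos _).le) hi
      _ ≤ #P.active * exp (8 * P.progress x C / n) := hI.varianceSum_le
      _ ≤ exp (n / 32 + n / 484) * exp (16 * n + 16) := by
          gcongr
          exact card_active_le_exp hsum
      _ = exp (n / 32 + n / 484 + (16 * n + 16)) := (exp_add _ _).symm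
  nlinarith [exp_le_exp.1 h]

lemma exists_freeDirection (hI : P.Invariant x σ C) (hv : ∀ i, ‖P.v i‖ = 1)
    (hrun : 2 * #(frozen x) < n) :
    ∃ w, ‖w‖ = 1 ∧ P.IsFreeDirection x w ∧ n / 4 * P.varianceForm σ w ≤ P.varianceSum σ := by
  set A : Finset (EuclideanSpace ℝ (Fin n)) :=
    (frozen x).image (fun j => EuclideanSpace.single j 1) ∪ (P.tight x).image P.v
  set U := (Submodule.span ℝ (A : Set (EuclideanSpace ℝ (Fin n))))ᗮ
  have hA : #A ≤ #(frozen x) + #(P.tight x) :=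
    (card_union_le _ _).trans (add_le_add card_image_le card_image_le)
  have hdim : n ≤ #A + finrank ℝ U := by
    simpa using card_add_finrank_orthogonal_span_ge A
  have hT := hI.card_tight_le
  have hU : n ≤ 4 * finrank ℝ U := by omega
  obtain ⟨w, hwU, hw, hQ⟩ := exists_unit_mem_finrank_mul_sum_le U (by omega) P.active
    (fun i _ => (exp_pos (n * σ i)).le) P.v
  have hperp (a) (ha : a ∈ A) : ⟪a, w⟫ = 0 :=
    Submodule.inner_right_of_mem_orthogonal (Submodule.subset_span ha) hwU
  refine ⟨w, hw, ⟨fun j hj => ?_, fun i hi => hperp _ (mem_union_right _ (mem_image_of_mem _ hi))⟩,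
    ?_⟩
  · simpa [EuclideanSpace.inner_single_left] using
      hperp _ (mem_union_left _ (mem_image_of_mem _ hj))
  · have hQ0 : 0 ≤ P.varianceForm σ w := sum_nonneg fun i _ => by positivity
    calc n / 4 * P.varianceForm σ w ≤ finrank ℝ U * P.varianceForm σ w := by
          gcongr
          rw [div_le_iff₀ (by norm_num)]
          exact_mod_cast (by omega : n ≤ finrank ℝ U * 4)
      _ ≤ P.varianceSum σ := by simpa [varianceForm, varianceSum, hv] using hQ

lemma exists_stepLength (hI : P.Invariant x σ C) (hn : 0 < n) {u : EuclideanSpace ℝ (Fin n)}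
    (hu : P.IsFreeDirection x u) :
    ∃ t, 0 < t ∧ t ≤ stepSize n ∧ (∀ j, (x + t • u) j ∈ Set.Icc (-1 : ℝ) 1) ∧
      (∀ i ∈ P.active, P.disc (x + t • u) i ≤ 11 * P.lam i) ∧
      P.progress x C < P.progress (x + t • u) (C + if t = stepSize n then 1 else 0) := by
  -- the constraints `t * b k ≤ a k`: upper faces, lower faces, then the active constraints
  set a : Fin n ⊕ Fin n ⊕ P.active → ℝ :=
    Sum.elim (fun j => 1 - x j) (Sum.elim (fun j => 1 + x j) fun i => 11 * P.lam i - P.disc x i)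
  set b : Fin n ⊕ Fin n ⊕ P.active → ℝ :=
    Sum.elim (fun j => u j) (Sum.elim (fun j => -u j) fun i => ⟪P.v i, u⟫)
  have ha : ∀ k, 0 ≤ a k := by
    rintro (j | j | ⟨i, hi⟩) <;> simp only [a, Sum.elim_inl, Sum.elim_inr, sub_nonneg]
    · exact (hI.mem_cube j).2
    · linarith [(hI.mem_cube j).1]
    · exact hI.disc_le i hi
  have hab : ∀ k, 0 < b k → 0 < a k := by
    rintro (j | j | ⟨i, hi⟩) hk <;> simp only [a, b, Sum.elim_inl, Sum.elim_inr] at hk ⊢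
    · have : x j ≠ 1 := fun h => hk.ne' (hu.apply_frozen j (by simp [h]))
      linarith [lt_of_le_of_ne (hI.mem_cube j).2 this]
    · have : x j ≠ -1 := fun h => hk.ne' (by simp [hu.apply_frozen j (by simp [h])])
      linarith [lt_of_le_of_ne' (hI.mem_cube j).1 this]
    · have : P.disc x i ≠ 11 * P.lam i := fun h => hk.ne' (hu.inner_tight i (by simp [hi, h]))
      linarith [lt_of_le_of_ne (hI.disc_le i hi) this]
  obtain ⟨t, ht0, htγ, hfeas, hstop⟩ := exists_maximal_feasible_step (stepSize_pos hn) ha hab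
  refine ⟨t, ht0, htγ, fun j => ?_, fun i hi => ?_, progress_lt hu ?_⟩
  · have h1 := hfeas (.inl j)
    have h2 := hfeas (.inr (.inl j))
    simp only [a, b, Sum.elim_inl, Sum.elim_inr] at h1 h2
    simp only [PiLp.add_apply, PiLp.smul_apply, smul_eq_mul, Set.mem_Icc]
    constructor <;> linarith
  · have h := hfeas (.inr (.inr ⟨i, hi⟩))
    simp only [a, b, Sum.elim_inr] at h
    rw [disc_add_smul]
    linarith
  · rcases hstop with h | ⟨j | j | ⟨i, hi⟩, hk, hk'⟩
    · exact .inl h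
    all_goals simp only [a, b, Sum.elim_inl, Sum.elim_inr] at hk hk'
    · refine .inr (.inl ⟨j, fun hj => hk.ne' (hu.apply_frozen j hj), ?_⟩)
      simp only [mem_frozen, PiLp.add_apply, PiLp.smul_apply, smul_eq_mul]
      left; linarith
    · refine .inr (.inl ⟨j, fun hj => by simp [hu.apply_frozen j hj] at hk, ?_⟩)
      simp only [mem_frozen, PiLp.add_apply, PiLp.smul_apply, smul_eq_mul]
      right; linarith
    · refine .inr (.inr ⟨i, fun hi => hk.ne' (hu.inner_tight i hi), ?_⟩)
      simp only [mem_tight, disc_add_smul]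
      exact ⟨hi, by linarith⟩

lemma add_smul (hI : P.Invariant x σ C) (hn : 0 < n) (hv : ∀ i, ‖P.v i‖ = 1)
    (hsum : ∑ i, exp (-P.lam i ^ 2 / 16) ≤ n / 32) {u : EuclideanSpace ℝ (Fin n)} (hu : ‖u‖ = 1)
    (hquad : n / 4 * P.varianceForm σ u ≤ P.varianceSum σ) {t : ℝ} {C' : ℕ}
    (hcube : ∀ j, (x + t • u) j ∈ Set.Icc (-1 : ℝ) 1)
    (hdisc : ∀ i ∈ P.active, P.disc (x + t • u) i ≤ 11 * P.lam i)
    (hprog : P.progress x C < P.progress (x + t • u) C')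
    (hpot : P.potential (x + t • u) (P.addVar σ u) C' ≤ n / 32) :
    P.Invariant (x + t • u) (P.addVar σ u) C' where
  mem_cube := hcube
  disc_le := hdisc
  potential_le := hpot
  one_le_barrier i hi := by
    obtain ⟨hia, hid⟩ := mem_tight.1 hi
    refine one_le_barrier_of_disc_eq hid ?_
    have hb : ⟪P.v i, u⟫ ^ 2 / n ≤ 1 := by
      rw [div_le_one (by positivity)]
      nlinarith [inner_sq_le_one hv hu i, (Nat.one_le_cast (α := ℝ)).2 hn]
    linarith [hI.var_le hn hsum hia, show P.addVar σ u i = σ i + ⟪P.v i, u⟫ ^ 2 / n from rfl]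
  varianceSum_le := by
    have hprog' : (P.progress x C : ℝ) + 1 ≤ P.progress (x + t • u) C' := by exact_mod_cast hprog
    calc P.varianceSum (P.addVar σ u) ≤ (1 + 8 / n) * P.varianceSum σ :=
          varianceSum_addVar_le hn hv hu hquad
      _ ≤ exp (8 / n) * (#P.active * exp (8 * P.progress x C / n)) := by
          refine mul_le_mul (by linarith [add_one_le_exp (8 / n : ℝ)]) hI.varianceSum_le
            (sum_nonneg fun _ _ => (exp_pos _).le) (exp_pos _).le
      _ = #P.active * exp (8 * (P.progress x C + 1) / n) := by
          rw [mul_left_comm, ← exp_add]; ring_nf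
      _ ≤ #P.active * exp (8 * P.progress (x + t • u) C' / n) := by gcongr

lemma exists_next (hI : P.Invariant x σ C) (hn : 0 < n) (hv : ∀ i, ‖P.v i‖ = 1)
    (hsum : ∑ i, exp (-P.lam i ^ 2 / 16) ≤ n / 32) (hrun : 2 * #(frozen x) < n) :
    ∃ x' σ' C', P.Invariant x' σ' C' ∧ P.progress x C < P.progress x' C' := by
  obtain ⟨w, hw, hfree, hquad⟩ := hI.exists_freeDirection hv hrun
  obtain ⟨tp, htp, htpγ, hcubep, hdiscp, hprogp⟩ := hI.exists_stepLength hn hfree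
  obtain ⟨tm, htm, htmγ, hcubem, hdiscm, hprogm⟩ := hI.exists_stepLength hn hfree.neg
  have havg := potential_average_le hn hv hw x σ C htp htm htpγ htmγ
  have hpot := hI.potential_le
  by_cases hplus : P.potential (x + tp • w) (P.addVar σ w)
      (C + if tp = stepSize n then 1 else 0) ≤ n / 32
  · exact ⟨_, _, _, hI.add_smul hn hv hsum hw hquad hcubep hdiscp hprogp hplus, hprogp⟩
  have hminus : P.potential (x + tm • -w) (P.addVar σ (-w))
      (C + if tm = stepSize n then 1 else 0) ≤ n / 32 := by
    rw [addVar_neg]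
    have hsplit : tm / (tp + tm) * (n / 32) + tp / (tp + tm) * (n / 32) = n / 32 := by
      rw [← add_mul, ← add_div, add_comm tm, div_self (by positivity), one_mul]
    by_contra hB
    have h1 := mul_lt_mul_of_pos_left (not_le.1 hplus) (by positivity : 0 < tm / (tp + tm))
    have h2 := mul_lt_mul_of_pos_left (not_le.1 hB) (by positivity : 0 < tp / (tp + tm))
    linarith
  exact ⟨_, _, _, hI.add_smul hn hv hsum (by rwa [norm_neg]) (by rwa [varianceForm_neg]) hcubem
    hdiscm hprogm hminus, hprogm⟩

lemma isPartialColoring (hI : P.Invariant x σ C) (hv : ∀ i, ‖P.v i‖ = 1)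
    (hlam : ∀ i, 0 ≤ P.lam i) (hx0 : ∀ j, P.x0 j ∈ Set.Icc (-1 : ℝ) 1)
    (hF : n ≤ 2 * #(frozen x)) :
    (∀ j, x j ∈ Set.Icc (-1 : ℝ) 1) ∧ (∀ i, ⟪P.v i, x - P.x0⟫ ≤ 11 * P.lam i) ∧
      (n : ℝ) / 2 ≤ ({j : Fin n | x j = 1 ∨ x j = -1}.ncard : ℝ) := by
  refine ⟨hI.mem_cube, fun i => ?_, ?_⟩
  · by_cases hi : i ∈ P.active
    · exact hI.disc_le i hi
    exact disc_le_of_notMem_active hv hlam hx0 hI.mem_cube hi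
  · have hcard : {j : Fin n | x j = 1 ∨ x j = -1}.ncard = #(frozen x) := by
      rw [← Set.ncard_coe_finset]
      congr 1
      ext j
      simp
    rw [hcard, div_le_iff₀ two_pos]
    exact_mod_cast (by omega : n ≤ #(frozen x) * 2)

end Invariant

lemma invariant_start (hlam : ∀ i, 0 ≤ P.lam i) (hsum : ∑ i, exp (-P.lam i ^ 2 / 16) ≤ n / 32)
    (hx0 : ∀ j, P.x0 j ∈ Set.Icc (-1 : ℝ) 1) : P.Invariant P.x0 0 0 where
  mem_cube := hx0
  disc_le i _ := by simp [disc, hlam i]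
  one_le_barrier i hi := by
    have hlam0 : P.lam i = 0 := by
      have := (mem_tight.1 hi).2
      simp only [disc, sub_self, inner_zero_right] at this
      linarith
    simp [barrier, disc, hlam0]
  potential_le := by
    have hΦ : P.barrierSum P.x0 0 ≤ ∑ i, exp (-P.lam i ^ 2 / 16) := by
      simp only [barrierSum, barrier, disc, sub_self, inner_zero_right, mul_zero, sub_zero,
        add_zero, Pi.zero_apply]
      exact sum_le_sum_of_subset_of_nonneg (subset_univ _) fun _ _ _ => (exp_pos _).le
    simp only [potential, CharP.cast_eq_zero, zero_div, zero_sub]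
    nlinarith [sq_nonneg ‖P.x0‖]
  varianceSum_le := by
    simp only [varianceSum, Pi.zero_apply, mul_zero, exp_zero, sum_const, nsmul_eq_mul, mul_one]
    exact le_mul_of_one_le_right (Nat.cast_nonneg _) (one_le_exp (by positivity))

end Problem

end PartialColoring

end

theorem stmt_0_general (n m : ℕ) (hn : 16 ≤ n)
    (v : Fin m → EuclideanSpace ℝ (Fin n)) (hv : ∀ i, ‖v i‖ = 1)
    (x0 : EuclideanSpace ℝ (Fin n)) (hx0 : ∀ j, x0 j ∈ Set.Icc (-1 : ℝ) 1)
    (lam : Fin m → ℝ)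
    (hnonneg : ∀ i, 0 ≤ lam i)
    (hsum : ∑ i, Real.exp (-(lam i) ^ 2 / 16) ≤ (n : ℝ) / 32) :
    ∃ x : EuclideanSpace ℝ (Fin n),
      (∀ j, x j ∈ Set.Icc (-1 : ℝ) 1) ∧
      (∀ i, (inner ℝ (v i) (x - x0) : ℝ) ≤ 11 * lam i) ∧
      (n : ℝ) / 2 ≤ ({j : Fin n | x j = 1 ∨ x j = -1}.ncard : ℝ) := by
  let P : PartialColoring.Problem n m := ⟨v, x0, lam⟩
  have hn0 : 0 < n := by omega
  obtain ⟨⟨x, σ, C⟩, hI, hF⟩ := exists_of_bounded_progress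
    (p := fun s : EuclideanSpace ℝ (Fin n) × (Fin m → ℝ) × ℕ => P.Invariant s.1 s.2.1 s.2.2)
    (q := fun s => n ≤ 2 * #(PartialColoring.frozen s.1)) (fun s => P.progress s.1 s.2.2)
    (2 * n ^ 2 + 2 * n) (fun _ hs => hs.progress_le hn0)
    (fun _ hs hq => by
      obtain ⟨x', σ', C', hI', hlt⟩ := hs.exists_next hn0 hv hsum (by omega)
      exact ⟨(x', σ', C'), hI', hlt⟩)
    (a := (P.x0, 0, 0)) (P.invariant_start hnonneg hsum hx0)
  exact ⟨x, hI.isPartialColoring hv hnonneg hx0 hF⟩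

/-- **Deterministic partial coloring (Theorem 1).** Given unit vectors `v 1, …, v m` in `ℝ^n`
(`n ≥ 16`), a starting point `x⁰ ∈ [-1,1]^n` and parameters `λ_1 ≥ … ≥ λ_m ≥ 0` with
`∑ i, exp(-λ_i²/16) ≤ n/32`, there is a point `x ∈ [-1,1]^n` with
`⟨v_i, x - x⁰⟩ ≤ 11 λ_i` for all `i` and at least `n/2` coordinates of `x` in `{-1,1}`. -/
theorem stmt_0 (n m : ℕ) (hn : 16 ≤ n)
    (v : Fin m → EuclideanSpace ℝ (Fin n)) (hv : ∀ i, ‖v i‖ = 1)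
    (x0 : EuclideanSpace ℝ (Fin n)) (hx0 : ∀ j, x0 j ∈ Set.Icc (-1 : ℝ) 1)
    (lam : Fin m → ℝ)
    (hmono : ∀ i j : Fin m, i ≤ j → lam j ≤ lam i)
    (hnonneg : ∀ i, 0 ≤ lam i)
    (hsum : ∑ i, Real.exp (-(lam i) ^ 2 / 16) ≤ (n : ℝ) / 32) :
    ∃ x : EuclideanSpace ℝ (Fin n),
      (∀ j, x j ∈ Set.Icc (-1 : ℝ) 1) ∧
      (∀ i, (inner ℝ (v i) (x - x0) : ℝ) ≤ 11 * lam i) ∧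
      (n : ℝ) / 2 ≤ ({j : Fin n | x j = 1 ∨ x j = -1}.ncard : ℝ) :=
  stmt_0_general n m hn v hv x0 hx0 lam hnonneg hsum
end

section
/- Let W ∈ ℝ^{m×m} be a symmetric positive semidefinite matrix, let A_1, …, A_n ∈ ℝ^{m×m} be symmetric matrices with ‖A_i‖_op ≤ 1 for all i, and let k > 0 be a real parameter. Then there exists a linear subspace U ⊆ ℝ^n with dim(U) ≥ (1 − 1/k)·n such that for every y ∈ U with ‖y‖_2 = 1 one has W • (∑_{i=1}^n y_i A_i)² ≤ k·Tr[W]. -/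
open Matrix

/-- The `ℓ²→ ℓ²` operator norm of a real square matrix, i.e. its largest singular value. -/
noncomputable def matrixOpNorm {m : ℕ} (A : Matrix (Fin m) (Fin m) ℝ) : ℝ :=
  ‖Matrix.toEuclideanCLM (𝕜 := ℝ) (n := Fin m) A‖

/-- The Frobenius inner product `A • B = ∑_{i,j} A_{ij} B_{ij}`. -/
def frob {m : ℕ} (A B : Matrix (Fin m) (Fin m) ℝ) : ℝ :=
  ∑ i, ∑ j, A i j * B i j

/-!
Let `G` be the `n × n` matrix `G i j = Tr (W A_i A_j)`. Its quadratic form is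
`y ↦ W • (∑ y_i A_i)²`, so `G` is positive semidefinite, and `G i i ≤ Tr W` because
`A_i² ≤ 1`; hence `Tr G ≤ n Tr W`. By Markov's inequality at most `n / k` eigenvalues of `G`
exceed `k Tr W`, and on the orthogonal complement of their eigenvectors the quadratic form is at
most `k Tr W` times the squared norm.
-/

open Module Finset RCLike
open scoped ComplexOrder InnerProductSpace

theorem Finset.card_filter_lt_mul_le_sum {ι : Type*} (s : Finset ι) {μ : ι → ℝ}
    (hμ : ∀ i ∈ s, 0 ≤ μ i) (τ : ℝ) : #{i ∈ s | τ < μ i} * τ ≤ ∑ i ∈ s, μ i :=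
  calc (#{i ∈ s | τ < μ i} : ℝ) * τ = ∑ i ∈ s with τ < μ i, τ := by
        rw [sum_const, nsmul_eq_mul]
    _ ≤ ∑ i ∈ s with τ < μ i, μ i := sum_le_sum fun i hi => (mem_filter.1 hi).2.le
    _ ≤ ∑ i ∈ s, μ i := sum_le_sum_of_subset_of_nonneg (filter_subset _ _) fun i hi _ => hμ i hi

section Spectral

variable {𝕜 E : Type*} [RCLike 𝕜] [NormedAddCommGroup E] [InnerProductSpace 𝕜 E]
  [FiniteDimensional 𝕜 E] {T : E →ₗ[𝕜] E} {n : ℕ}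

namespace LinearMap.IsSymmetric

theorem re_inner_apply_self_eq_sum (hT : T.IsSymmetric) (hn : finrank 𝕜 E = n) (y : E) :
    re ⟪y, T y⟫_𝕜 = ∑ i, hT.eigenvalues hn i * ‖⟪hT.eigenvectorBasis hn i, y⟫_𝕜‖ ^ 2 := by
  rw [← (hT.eigenvectorBasis hn).sum_inner_mul_inner y (T y), map_sum]
  refine sum_congr rfl fun i _ => ?_
  rw [← hT, apply_eigenvectorBasis, inner_smul_left, conj_ofReal, mul_left_comm, re_ofReal_mul,
    inner_mul_symm_re_eq_norm, norm_mul, ← inner_conj_symm y, norm_conj, sq]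

theorem exists_submodule_re_inner_le (hT : T.IsSymmetric) (hn : finrank 𝕜 E = n) (τ : ℝ) :
    ∃ U : Submodule 𝕜 E, n ≤ finrank 𝕜 U + #{i | τ < hT.eigenvalues hn i} ∧
      ∀ y ∈ U, re ⟪y, T y⟫_𝕜 ≤ τ * ‖y‖ ^ 2 := by
  set S : Finset (Fin n) := {i | τ < hT.eigenvalues hn i}
  set K := Submodule.span 𝕜 (Set.range fun i : S => hT.eigenvectorBasis hn i)
  refine ⟨Kᗮ, ?_, fun y hy => ?_⟩
  · have hK : finrank 𝕜 K ≤ #S := (finrank_range_le_card _).trans_eq (Fintype.card_coe S)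
    have := K.finrank_add_finrank_orthogonal
    omega
  · rw [hT.re_inner_apply_self_eq_sum hn, ← (hT.eigenvectorBasis hn).sum_sq_norm_inner_right y,
      mul_sum]
    refine sum_le_sum fun i _ => ?_
    by_cases hi : i ∈ S
    · have : ⟪hT.eigenvectorBasis hn i, y⟫_𝕜 = 0 :=
        K.inner_right_of_mem_orthogonal (Submodule.subset_span ⟨⟨i, hi⟩, rfl⟩) hy
      simp [this]
    · exact mul_le_mul_of_nonneg_right (by simpa [S] using hi) (sq_nonneg _)

end LinearMap.IsSymmetric

theorem LinearMap.IsPositive.exists_submodule_re_inner_le (hT : T.IsPositive) {t k : ℝ}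
    (ht : 0 ≤ t) (hk : 0 < k) (htr : re (T.trace 𝕜 E) ≤ finrank 𝕜 E * t) :
    ∃ U : Submodule 𝕜 E, (1 - 1 / k) * finrank 𝕜 E ≤ finrank 𝕜 U ∧
      ∀ y ∈ U, re ⟪y, T y⟫_𝕜 ≤ k * t * ‖y‖ ^ 2 := by
  set μ := hT.isSymmetric.eigenvalues rfl
  have hμ : ∀ i, 0 ≤ μ i := hT.nonneg_eigenvalues rfl
  have hsum : ∑ i, μ i ≤ finrank 𝕜 E * t := hT.isSymmetric.re_trace_eq_sum_eigenvalues rfl ▸ htr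
  obtain ⟨U, hdim, hU⟩ := hT.isSymmetric.exists_submodule_re_inner_le rfl (k * t)
  refine ⟨U, ?_, hU⟩
  have hbad : (#{i | k * t < μ i} : ℝ) * k ≤ finrank 𝕜 E := by
    rcases ht.eq_or_lt with rfl | ht
    · have : #{i | k * 0 < μ i} = 0 := by
        refine card_eq_zero.2 (filter_eq_empty_iff.2 fun i _ => ?_)
        have := single_le_sum (fun j _ => hμ j) (mem_univ i) |>.trans hsum
        simp only [mul_zero] at this ⊢
        exact this.not_gt
      rw [this, Nat.cast_zero, zero_mul]
      positivity
    · have := (univ.card_filter_lt_mul_le_sum (fun i _ => hμ i) (k * t)).trans hsum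
      nlinarith
  have hdim' : (finrank 𝕜 E : ℝ) ≤ finrank 𝕜 U + #{i | k * t < μ i} := by exact_mod_cast hdim
  have hbad' : (#{i | k * t < μ i} : ℝ) ≤ finrank 𝕜 E / k := (le_div_iff₀ hk).2 hbad
  linarith [show (1 - 1 / k) * finrank 𝕜 E = finrank 𝕜 E - finrank 𝕜 E / k by ring]

end Spectral

namespace Matrix

variable {𝕜 n : Type*} [RCLike 𝕜] [Fintype n] [DecidableEq n]

theorem PosSemidef.exists_submodule_re_dotProduct_mulVec_le {G : Matrix n n 𝕜}
    (hG : G.PosSemidef) {t k : ℝ} (ht : 0 ≤ t) (hk : 0 < k)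
    (htr : re G.trace ≤ Fintype.card n * t) :
    ∃ U : Submodule 𝕜 (n → 𝕜), (1 - 1 / k) * Fintype.card n ≤ finrank 𝕜 U ∧
      ∀ y ∈ U, re (star y ⬝ᵥ G *ᵥ y) ≤ k * t * ∑ i, ‖y i‖ ^ 2 := by
  obtain ⟨U, hdim, hU⟩ := (isPositive_toEuclideanLin_iff.2 hG).exists_submodule_re_inner_le ht hk
    (by simpa [toLpLin_eq_toLin] using htr)
  refine ⟨U.map (WithLp.linearEquiv 2 𝕜 (n → 𝕜)).toLinearMap, ?_, ?_⟩
  · rwa [LinearEquiv.finrank_map_eq, ← finrank_euclideanSpace (𝕜 := 𝕜)]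
  · rintro _ ⟨y, hy, rfl⟩
    simpa [EuclideanSpace.inner_eq_star_dotProduct, EuclideanSpace.norm_sq_eq, dotProduct_comm]
      using hU y hy

theorem PosSemidef.trace_mul_nonneg {A B : Matrix n n 𝕜} (hA : A.PosSemidef)
    (hB : B.PosSemidef) : 0 ≤ (A * B).trace := by
  open scoped MatrixOrder in
  set S := CFC.sqrt A
  have hS : Sᴴ = S := (CFC.sqrt_nonneg A).posSemidef.isHermitian.eq
  calc 0 ≤ (Sᴴ * B * S).trace := (hB.conjTranspose_mul_mul_same S).trace_nonneg
    _ = (A * B).trace := by rw [hS, trace_mul_cycle, CFC.sqrt_mul_sqrt_self A hA.nonneg]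

theorem posSemidef_one_sub_conjTranspose_mul_self {A : Matrix n n 𝕜}
    (hA : ‖toEuclideanCLM (𝕜 := 𝕜) (n := n) A‖ ≤ 1) : (1 - Aᴴ * A).PosSemidef := by
  rw [← isPositive_toEuclideanLin_iff]
  refine ⟨isSymmetric_toEuclideanLin_iff.2 (isHermitian_one.sub
    (isHermitian_conjTranspose_mul_self A)), fun x => ?_⟩
  have hAx : ‖toEuclideanCLM (𝕜 := 𝕜) A x‖ ≤ ‖x‖ :=
    (ContinuousLinearMap.le_opNorm _ x).trans (mul_le_of_le_one_left (norm_nonneg x) hA)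
  rw [map_sub, toLpLin_one, toLpLin_mul_same, toEuclideanLin_conjTranspose_eq_adjoint,
    LinearMap.sub_apply, LinearMap.id_apply, LinearMap.comp_apply, inner_sub_left,
    LinearMap.adjoint_inner_left, map_sub, inner_self_eq_norm_sq, inner_self_eq_norm_sq, sub_nonneg]
  exact pow_le_pow_left₀ (norm_nonneg _) hAx 2

end Matrix

section WeightedGram

variable {R ι m : Type*} [Fintype m] [DecidableEq m]

def weightedGram [CommRing R] (W : Matrix m m R) (A : ι → Matrix m m R) : Matrix ι ι R :=
  of fun i j => (W * (A i * A j)).trace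

theorem dotProduct_weightedGram_mulVec [Fintype ι] [CommRing R] (W : Matrix m m R)
    (A : ι → Matrix m m R) (y : ι → R) :
    y ⬝ᵥ weightedGram W A *ᵥ y = (W * (∑ i, y i • A i) ^ 2).trace := by
  rw [sq, sum_mul_sum]
  simp only [smul_mul_assoc, mul_sum, mul_smul_comm, trace_sum, trace_smul,
    dotProduct, mulVec, weightedGram, of_apply, smul_eq_mul]
  refine sum_congr rfl fun i _ => sum_congr rfl fun j _ => by ring

variable {W : Matrix m m ℝ} {A : ι → Matrix m m ℝ}

theorem posSemidef_weightedGram [Fintype ι] (hW : W.PosSemidef) (hA : ∀ i, (A i).IsSymm) :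
    (weightedGram W A).PosSemidef := by
  have hWs : Wᵀ = W := hW.isHermitian.eq
  refine .of_dotProduct_mulVec_nonneg ?_ fun y => ?_
  · refine isHermitian_iff_isSymm.2 (IsSymm.ext fun i j => ?_)
    rw [weightedGram, of_apply, of_apply, ← trace_transpose, transpose_mul, transpose_mul,
      (hA i).eq, (hA j).eq, hWs, trace_mul_comm]
  · have hM : (∑ i, y i • A i)ᴴ = ∑ i, y i • A i := by
      simp only [conjTranspose_eq_transpose_of_trivial, transpose_sum, transpose_smul, (hA _).eq]
    rw [star_trivial, dotProduct_weightedGram_mulVec, sq]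
    nth_rw 1 [← hM]
    exact hW.trace_mul_nonneg (posSemidef_conjTranspose_mul_self _)

theorem weightedGram_apply_self_le_trace (hW : W.PosSemidef) {i : ι} (hA : (A i).IsSymm)
    (hop : ‖toEuclideanCLM (𝕜 := ℝ) (n := m) (A i)‖ ≤ 1) : weightedGram W A i i ≤ W.trace := by
  have := hW.trace_mul_nonneg (posSemidef_one_sub_conjTranspose_mul_self hop)
  rwa [conjTranspose_eq_transpose_of_trivial, hA.eq, mul_sub, mul_one, trace_sub,
    sub_nonneg] at this

theorem trace_weightedGram_le [Fintype ι] (hW : W.PosSemidef) (hA : ∀ i, (A i).IsSymm)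
    (hop : ∀ i, ‖toEuclideanCLM (𝕜 := ℝ) (n := m) (A i)‖ ≤ 1) :
    (weightedGram W A).trace ≤ Fintype.card ι * W.trace :=
  calc (weightedGram W A).trace = ∑ i, weightedGram W A i i := rfl
    _ ≤ ∑ _i : ι, W.trace :=
      sum_le_sum fun i _ => weightedGram_apply_self_le_trace hW (hA i) (hop i)
    _ = Fintype.card ι * W.trace := by rw [sum_const, card_univ, nsmul_eq_mul]

end WeightedGram

theorem frob_eq_trace_transpose_mul {m : ℕ} (A B : Matrix (Fin m) (Fin m) ℝ) :
    frob A B = (Aᵀ * B).trace := by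
  simp only [frob, trace, Matrix.diag, mul_apply, transpose_apply]
  exact sum_comm

/-- **Lemma 11.** For a symmetric psd matrix `W ∈ ℝ^{m×m}`, symmetric matrices
`A_1, …, A_n` with `‖A_i‖_op ≤ 1` and a parameter `k > 0`, there is a subspace `U ⊆ ℝ^n` of
dimension at least `(1 - 1/k) n` such that `W • (∑ i, y_i A_i)² ≤ k·Tr[W]` for all unit
`y ∈ U`. -/
theorem stmt_9 (m n : ℕ) (W : Matrix (Fin m) (Fin m) ℝ) (hW : W.PosSemidef)
    (A : Fin n → Matrix (Fin m) (Fin m) ℝ)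
    (hsymm : ∀ i, (A i).IsSymm) (hop : ∀ i, matrixOpNorm (A i) ≤ 1)
    (k : ℝ) (hk : 0 < k) :
    ∃ U : Submodule ℝ (Fin n → ℝ),
      (1 - 1 / k) * (n : ℝ) ≤ (Module.finrank ℝ U : ℝ) ∧
      ∀ y ∈ U, ∑ j, (y j) ^ 2 = 1 →
        frob W ((∑ i, y i • A i) ^ 2) ≤ k * W.trace := by
  obtain ⟨U, hdim, hU⟩ :=
    (posSemidef_weightedGram hW hsymm).exists_submodule_re_dotProduct_mulVec_le
      hW.trace_nonneg hk (by simpa using trace_weightedGram_le hW hsymm hop)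
  refine ⟨U, by simpa using hdim, fun y hy hy1 => ?_⟩
  have := hU y hy
  simp only [star_trivial, re_to_real, Real.norm_eq_abs, sq_abs, hy1, mul_one,
    dotProduct_weightedGram_mulVec] at this
  rwa [frob_eq_trace_transpose_mul, show Wᵀ = W from hW.isHermitian.eq]
end

section
/- Let A_1, …, A_n ∈ ℝ^{m×m} be symmetric matrices with ‖A_i‖_op ≤ 1 for all i, let c ∈ ℝ^n, and let ε, δ > 0 satisfy ε·δ·n ≤ 1. Set W := exp(ε ∑_{i=1}^n c_i A_i) (the matrix exponential). Let y ∈ ℝ^n satisfy ‖y‖_∞ ≤ 1, ∑_{i=1}^n y_i·(W • A_i) = 0, and W • (∑_{i=1}^n y_i A_i)² ≤ 16·Tr[W]. Then Tr[exp(ε ∑_{i=1}^n (c_i + δ y_i) A_i)] ≤ (1 + 16 ε² δ²)·Tr[exp(ε ∑_{i=1}^n c_i A_i)]. -/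
open Matrix

/-!
Write `W = exp X` with `X = ε ∑ cᵢ Aᵢ` and `B = εδ ∑ yᵢ Aᵢ`, so that `‖B‖_op ≤ εδn ≤ 1`.
By Golden–Thompson, `Tr exp (X + B) ≤ Tr (W exp B)`, and since `exp t ≤ 1 + t + t²` on `[-1, 1]`
the spectral calculus gives `exp B ≤ 1 + B + B²`; as `W ≥ 0` this yields
`Tr exp (X + B) ≤ Tr W + Tr (W B) + Tr (W B²)`. The linear term vanishes by the orthogonality
hypothesis and the quadratic one is at most `16 ε² δ² Tr W`.

Golden–Thompson itself is proved in the classical way: the trace inequality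
`Tr (CD)^(2^(k+1)) ≤ Tr (C²D²)^(2^k)` for symmetric `C, D` makes
`k ↦ Tr (exp (X/2^k) exp (B/2^k))^(2^k)` antitone, and by the Lie product formula this
sequence converges to `Tr exp (X + B)`.
-/

open NormedSpace Filter Topology

section LieProduct

variable {𝔸 : Type*} [NormedRing 𝔸]

lemma norm_pow_sub_pow_le [NormOneClass 𝔸] {a b : 𝔸} {K : ℝ} (ha : ‖a‖ ≤ K) (hb : ‖b‖ ≤ K)
    (n : ℕ) : ‖a ^ n - b ^ n‖ ≤ n * K ^ (n - 1) * ‖a - b‖ := by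
  induction n with
  | zero => simp
  | succ n ih =>
    have hK : 0 ≤ K := (norm_nonneg a).trans ha
    have hpow : ‖a ^ n‖ ≤ K ^ n := (norm_pow_le a n).trans (pow_le_pow_left₀ (norm_nonneg a) ha n)
    calc ‖a ^ (n + 1) - b ^ (n + 1)‖ = ‖a ^ n * (a - b) + (a ^ n - b ^ n) * b‖ := by
          congr 1; noncomm_ring
      _ ≤ K ^ n * ‖a - b‖ + n * K ^ (n - 1) * ‖a - b‖ * K := by
          refine (norm_add_le _ _).trans (add_le_add ?_ ?_) <;> refine (norm_mul_le _ _).trans ?_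
          · gcongr
          · gcongr
      _ = (n + 1 : ℕ) * K ^ (n + 1 - 1) * ‖a - b‖ := by
          rcases n with _ | n
          · norm_num
          · simp only [Nat.add_sub_cancel]; push_cast; ring

variable [NormedAlgebra ℝ 𝔸]

lemma NormedSpace.norm_exp_le_exp_norm [NormOneClass 𝔸] (x : 𝔸) : ‖exp x‖ ≤ Real.exp ‖x‖ := by
  have hterm (n : ℕ) : ‖(n.factorial : ℝ)⁻¹ • x ^ n‖ ≤ ‖x‖ ^ n / n.factorial := by
    rw [norm_smul, norm_inv, Real.norm_natCast, div_eq_inv_mul]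
    exact mul_le_mul_of_nonneg_left (norm_pow_le x n) (by positivity)
  rw [exp_eq_tsum ℝ, Real.exp_eq_exp_ℝ, exp_eq_tsum_div]
  exact tsum_of_norm_bounded (Real.summable_pow_div_factorial _).hasSum hterm

variable [CompleteSpace 𝔸]

lemma isLittleO_exp_smul_mul_exp_smul_sub_exp_smul_add (X B : 𝔸) :
    (fun t : ℝ => exp (t • X) * exp (t • B) - exp (t • (X + B))) =o[𝓝 0] fun t => t := by
  have hprod := (hasDerivAt_exp_smul_const X (0 : ℝ)).mul (hasDerivAt_exp_smul_const B (0 : ℝ))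
  have hdiff := hprod.sub (hasDerivAt_exp_smul_const (X + B) (0 : ℝ))
  simp only [zero_smul, exp_zero, one_mul, mul_one, sub_self] at hdiff
  rw [hasDerivAt_iff_isLittleO_nhds_zero] at hdiff
  simpa [smul_add] using hdiff

/-- The Lie product formula. Both `exp (t • X) * exp (t • B)` and `exp (t • (X + B))` are
`1 + t • (X + B) + o(t)`, and `norm_pow_sub_pow_le` turns the `o(1/n)` gap between the factors
into an `o(1)` gap between their `n`-th powers. -/
theorem tendsto_exp_mul_exp_pow [NormOneClass 𝔸] (X B : 𝔸) :
    Tendsto (fun n : ℕ => (exp ((n : ℝ)⁻¹ • X) * exp ((n : ℝ)⁻¹ • B)) ^ n) atTop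
      (𝓝 (exp (X + B))) := by
  set s := ‖X‖ + ‖B‖
  have hsmall : Tendsto (fun n : ℕ => ‖exp ((n : ℝ)⁻¹ • X) * exp ((n : ℝ)⁻¹ • B)
      - exp ((n : ℝ)⁻¹ • (X + B))‖ / (n : ℝ)⁻¹) atTop (𝓝 0) :=
    (isLittleO_exp_smul_mul_exp_smul_sub_exp_smul_add X B).norm_left.tendsto_div_nhds_zero.comp
      tendsto_inv_atTop_nhds_zero_nat
  rw [tendsto_iff_norm_sub_tendsto_zero]
  refine squeeze_zero' (Eventually.of_forall fun _ => norm_nonneg _) ?_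
    (mul_zero (Real.exp s) ▸ hsmall.const_mul (Real.exp s))
  filter_upwards [eventually_ge_atTop 1] with n hn
  set t := (n : ℝ)⁻¹
  have ht : 0 < t := by positivity
  set K := Real.exp (t * s)
  have hnorm_smul (Z : 𝔸) : ‖t • Z‖ = t * ‖Z‖ := by rw [norm_smul, Real.norm_of_nonneg ht.le]
  have ha : ‖exp (t • X) * exp (t • B)‖ ≤ K := by
    calc _ ≤ ‖exp (t • X)‖ * ‖exp (t • B)‖ := norm_mul_le _ _
      _ ≤ Real.exp (t * ‖X‖) * Real.exp (t * ‖B‖) := by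
          rw [← hnorm_smul, ← hnorm_smul]
          gcongr <;> exact norm_exp_le_exp_norm _
      _ = K := by rw [← Real.exp_add, ← mul_add]
  have hb : ‖exp (t • (X + B))‖ ≤ K := by
    refine (norm_exp_le_exp_norm _).trans (Real.exp_le_exp.mpr ?_)
    rw [hnorm_smul]
    exact mul_le_mul_of_nonneg_left (norm_add_le X B) ht.le
  have hKpow : K ^ (n - 1) ≤ Real.exp s := by
    calc K ^ (n - 1) ≤ K ^ n := pow_le_pow_right₀ (Real.one_le_exp (by positivity)) (Nat.sub_le n 1)
      _ = Real.exp s := by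
          rw [← Real.exp_nat_mul, ← mul_assoc, mul_inv_cancel₀ (by positivity), one_mul]
  have hbpow : exp (t • (X + B)) ^ n = exp (X + B) := by
    let +nondep : NormedAlgebra ℚ 𝔸 := .restrictScalars ℚ ℝ 𝔸
    rw [← NormedSpace.exp_nsmul, ← Nat.cast_smul_eq_nsmul ℝ, smul_smul,
      mul_inv_cancel₀ (by positivity), one_smul]
  calc _ = ‖(exp (t • X) * exp (t • B)) ^ n - exp (t • (X + B)) ^ n‖ := by rw [hbpow]
    _ ≤ n * K ^ (n - 1) * ‖exp (t • X) * exp (t • B) - exp (t • (X + B))‖ :=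
        norm_pow_sub_pow_le ha hb n
    _ = K ^ (n - 1) * (‖exp (t • X) * exp (t • B) - exp (t • (X + B))‖ / t) := by
        rw [div_inv_eq_mul]; ring
    _ ≤ Real.exp s * (‖exp (t • X) * exp (t • B) - exp (t • (X + B))‖ / t) := by gcongr

end LieProduct

namespace Matrix

variable {ι : Type*}

lemma isSymm_sum_smul {κ : Type*} (s : Finset κ) {A : κ → Matrix ι ι ℝ}
    (hA : ∀ i, (A i).IsSymm) (v : κ → ℝ) : (∑ i ∈ s, v i • A i).IsSymm := by
  simp [IsSymm, transpose_sum, fun i => (hA i).eq]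

variable [Fintype ι]

lemma two_mul_trace_mul_le (P Q : Matrix ι ι ℝ) :
    2 * (P * Q).trace ≤ (P * Pᵀ).trace + (Qᵀ * Q).trace := by
  have h := (posSemidef_self_mul_conjTranspose (P - Qᵀ)).trace_nonneg
  have hcross : (Qᵀ * Pᵀ).trace = (P * Q).trace := by rw [← transpose_mul, trace_transpose]
  simp only [conjTranspose_eq_transpose_of_trivial, transpose_sub, transpose_transpose, sub_mul,
    mul_sub, trace_sub, hcross] at h
  linarith

variable [DecidableEq ι]

lemma trace_mul_pow_comm {R : Type*} [CommRing R] (P Q : Matrix ι ι R) (n : ℕ) :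
    ((P * Q) ^ n).trace = ((Q * P) ^ n).trace := by
  cases n with
  | zero => rfl
  | succ n =>
    rw [pow_succ, ← mul_assoc, mul_pow_mul, mul_assoc, trace_mul_comm, mul_assoc, ← pow_succ]

lemma two_mul_trace_mul_pow_two_pow_le (P Q : Matrix ι ι ℝ) (k : ℕ) :
    2 * ((P * Q) ^ 2 ^ k).trace ≤ ((P * Pᵀ) ^ 2 ^ k).trace + ((Qᵀ * Q) ^ 2 ^ k).trace := by
  induction k generalizing P Q with
  | zero => simpa using two_mul_trace_mul_le P Q
  | succ k ih =>
    have hsq (M : Matrix ι ι ℝ) : M ^ 2 ^ (k + 1) = (M * M) ^ 2 ^ k := by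
      rw [pow_succ', pow_mul, sq]
    have hleft : ((P * Q * (P * Q)ᵀ) ^ 2 ^ k).trace = ((Pᵀ * P * (Q * Qᵀ)) ^ 2 ^ k).trace := by
      rw [transpose_mul, show P * Q * (Qᵀ * Pᵀ) = P * (Q * Qᵀ * Pᵀ) by noncomm_ring,
        trace_mul_pow_comm, mul_assoc, trace_mul_pow_comm]
    have hright : (((P * Q)ᵀ * (P * Q)) ^ 2 ^ k).trace = ((Pᵀ * P * (Q * Qᵀ)) ^ 2 ^ k).trace := by
      rw [transpose_mul, show Qᵀ * Pᵀ * (P * Q) = Qᵀ * (Pᵀ * P * Q) by noncomm_ring,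
        trace_mul_pow_comm, mul_assoc]
    have hP : ((Pᵀ * P * (Pᵀ * P)) ^ 2 ^ k).trace = ((P * Pᵀ * (P * Pᵀ)) ^ 2 ^ k).trace := by
      rw [show Pᵀ * P * (Pᵀ * P) = Pᵀ * (P * Pᵀ * P) by noncomm_ring, trace_mul_pow_comm,
        mul_assoc]
    have hQ : ((Q * Qᵀ * (Q * Qᵀ)) ^ 2 ^ k).trace = ((Qᵀ * Q * (Qᵀ * Q)) ^ 2 ^ k).trace := by
      rw [show Q * Qᵀ * (Q * Qᵀ) = Q * (Qᵀ * Q * Qᵀ) by noncomm_ring, trace_mul_pow_comm,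
        mul_assoc]
    calc 2 * ((P * Q) ^ 2 ^ (k + 1)).trace = 2 * ((P * Q * (P * Q)) ^ 2 ^ k).trace := by
          rw [hsq]
      _ ≤ ((P * Q * (P * Q)ᵀ) ^ 2 ^ k).trace + (((P * Q)ᵀ * (P * Q)) ^ 2 ^ k).trace := ih _ _
      _ = 2 * ((Pᵀ * P * (Q * Qᵀ)) ^ 2 ^ k).trace := by rw [hleft, hright]; ring
      _ ≤ ((Pᵀ * P * (Pᵀ * P)) ^ 2 ^ k).trace + ((Q * Qᵀ * (Q * Qᵀ)) ^ 2 ^ k).trace := by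
          simpa using ih (Pᵀ * P) (Q * Qᵀ)
      _ = ((P * Pᵀ) ^ 2 ^ (k + 1)).trace + ((Qᵀ * Q) ^ 2 ^ (k + 1)).trace := by
          rw [hP, hQ, hsq, hsq]

lemma trace_mul_pow_two_pow_succ_le {C D : Matrix ι ι ℝ} (hC : C.IsSymm) (hD : D.IsSymm)
    (k : ℕ) : ((C * D) ^ 2 ^ (k + 1)).trace ≤ ((C ^ 2 * D ^ 2) ^ 2 ^ k).trace := by
  have h := two_mul_trace_mul_pow_two_pow_le (C * D) (C * D) k
  rw [transpose_mul, hC.eq, hD.eq] at h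
  have h1 : ((C * D * (D * C)) ^ 2 ^ k).trace = ((C ^ 2 * D ^ 2) ^ 2 ^ k).trace := by
    rw [show C * D * (D * C) = C * (D ^ 2 * C) by noncomm_ring, trace_mul_pow_comm, mul_assoc,
      ← sq, trace_mul_pow_comm]
  have h2 : ((D * C * (C * D)) ^ 2 ^ k).trace = ((C ^ 2 * D ^ 2) ^ 2 ^ k).trace := by
    rw [show D * C * (C * D) = D * (C ^ 2 * D) by noncomm_ring, trace_mul_pow_comm, mul_assoc,
      ← sq]
  rw [pow_succ', pow_mul, sq]
  linarith

lemma trace_exp_half_mul_pow_le {X B : Matrix ι ι ℝ} (hX : X.IsSymm) (hB : B.IsSymm) (k : ℕ) :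
    ((exp ((2 : ℝ)⁻¹ • X) * exp ((2 : ℝ)⁻¹ • B)) ^ 2 ^ (k + 1)).trace ≤
      ((exp X * exp B) ^ 2 ^ k).trace := by
  have hsq (Y : Matrix ι ι ℝ) : exp ((2 : ℝ)⁻¹ • Y) ^ 2 = exp Y := by
    rw [← Matrix.exp_nsmul, ← Nat.cast_smul_eq_nsmul ℝ, smul_smul]; norm_num
  simpa only [hsq] using
    trace_mul_pow_two_pow_succ_le (hX.smul (2 : ℝ)⁻¹).exp (hB.smul (2 : ℝ)⁻¹).exp k

lemma antitone_trace_exp_mul_exp_pow_two_pow {X B : Matrix ι ι ℝ} (hX : X.IsSymm)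
    (hB : B.IsSymm) : Antitone fun k : ℕ =>
      ((exp (((2 ^ k : ℕ) : ℝ)⁻¹ • X) * exp (((2 ^ k : ℕ) : ℝ)⁻¹ • B)) ^ 2 ^ k).trace := by
  refine antitone_nat_of_succ_le fun k => ?_
  have hhalf (Y : Matrix ι ι ℝ) :
      ((2 ^ (k + 1) : ℕ) : ℝ)⁻¹ • Y = (2 : ℝ)⁻¹ • ((2 ^ k : ℕ) : ℝ)⁻¹ • Y := by
    rw [smul_smul]; push_cast; rw [pow_succ, mul_inv, mul_comm]
  simp only [hhalf]
  exact trace_exp_half_mul_pow_le (hX.smul _) (hB.smul _) k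

section OperatorNorm

open scoped Matrix.Norms.L2Operator MatrixOrder

/-- The Golden–Thompson inequality. -/
theorem trace_exp_add_le_trace_exp_mul_exp {X B : Matrix ι ι ℝ} (hX : X.IsSymm)
    (hB : B.IsSymm) : (exp (X + B)).trace ≤ (exp X * exp B).trace := by
  -- the operator norm has `‖1‖ = 1`, needed for the Lie product formula, only if `ι` is nonempty
  cases isEmpty_or_nonempty ι
  · simp [trace]
  have hlim := ((continuous_id.matrix_trace).tendsto _).comp
    ((tendsto_exp_mul_exp_pow X B).comp (tendsto_pow_atTop_atTop_of_one_lt (α := ℕ) one_lt_two))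
  simpa using le_of_tendsto' hlim fun k =>
    antitone_trace_exp_mul_exp_pow_two_pow hX hB (Nat.zero_le k)

lemma IsSymm.exp_nonneg {X : Matrix ι ι ℝ} (hX : X.IsSymm) : 0 ≤ NormedSpace.exp X :=
  IsSelfAdjoint.exp_nonneg hX

lemma IsSymm.exp_le_one_add_add_sq {B : Matrix ι ι ℝ} (hB : B.IsSymm) (hnorm : ‖B‖ ≤ 1) :
    NormedSpace.exp B ≤ 1 + B + B ^ 2 := by
  have hsa : IsSelfAdjoint B := hB
  have hone : ‖(1 : Matrix ι ι ℝ)‖ ≤ 1 := by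
    rw [cstar_norm_def, map_one]; exact ContinuousLinearMap.norm_id_le
  have hpoly : 1 + B + B ^ 2 = cfc (fun x : ℝ => 1 + x + x ^ 2) B := by
    rw [cfc_add .., cfc_add .., cfc_const_one .., cfc_id' .., cfc_pow_id ..]
  rw [← CFC.real_exp_eq_normedSpace_exp hsa, hpoly]
  refine cfc_mono fun x hx => ?_
  have hx1 : |x| ≤ 1 := by
    have hball := spectrum.subset_closedBall_norm_mul B hx
    rw [Metric.mem_closedBall, dist_zero_right, Real.norm_eq_abs] at hball
    exact hball.trans (mul_le_one₀ hnorm (norm_nonneg _) hone)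
  linarith [(abs_le.mp (Real.abs_exp_sub_one_sub_id_le hx1)).2]

lemma trace_mul_nonneg {P Q : Matrix ι ι ℝ} (hP : 0 ≤ P) (hQ : 0 ≤ Q) : 0 ≤ (P * Q).trace := by
  obtain ⟨S, rfl⟩ := CStarAlgebra.nonneg_iff_eq_star_mul_self.mp hQ
  rw [← mul_assoc, trace_mul_comm, ← mul_assoc]
  exact (nonneg_iff_posSemidef.mp (star_right_conjugate_nonneg hP S)).trace_nonneg

lemma trace_exp_add_le_of_norm_le_one {X B : Matrix ι ι ℝ} (hX : X.IsSymm) (hB : B.IsSymm)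
    (hnorm : ‖B‖ ≤ 1) :
    (exp (X + B)).trace ≤ (exp X).trace + (exp X * B).trace + (exp X * B ^ 2).trace := by
  have hgap := trace_mul_nonneg hX.exp_nonneg (sub_nonneg.mpr (hB.exp_le_one_add_add_sq hnorm))
  rw [mul_sub, trace_sub, mul_add, mul_add, mul_one, trace_add, trace_add] at hgap
  linarith [trace_exp_add_le_trace_exp_mul_exp hX hB]

end OperatorNorm

end Matrix

lemma frob_eq_trace_mul {m : ℕ} (W : Matrix (Fin m) (Fin m) ℝ) {A : Matrix (Fin m) (Fin m) ℝ}
    (hA : A.IsSymm) : frob W A = (W * A).trace := by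
  simp only [frob, trace, diag, mul_apply, hA.apply]

lemma matrixOpNorm_smul {m : ℕ} (a : ℝ) (A : Matrix (Fin m) (Fin m) ℝ) :
    matrixOpNorm (a • A) = |a| * matrixOpNorm A := by
  rw [matrixOpNorm, _root_.map_smul, norm_smul, Real.norm_eq_abs, matrixOpNorm]

lemma matrixOpNorm_sum_smul_le_card {m : ℕ} {κ : Type*} [Fintype κ]
    {A : κ → Matrix (Fin m) (Fin m) ℝ} (hA : ∀ i, matrixOpNorm (A i) ≤ 1) {v : κ → ℝ}
    (hv : ∀ i, |v i| ≤ 1) : matrixOpNorm (∑ i, v i • A i) ≤ Fintype.card κ := by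
  calc matrixOpNorm (∑ i, v i • A i) ≤ ∑ i, matrixOpNorm (v i • A i) := by
        simp only [matrixOpNorm, map_sum]; exact norm_sum_le _ _
    _ ≤ ∑ _i : κ, (1 : ℝ) := Finset.sum_le_sum fun i _ => by
        rw [matrixOpNorm_smul]; exact mul_le_one₀ (hv i) (norm_nonneg _) (hA i)
    _ = Fintype.card κ := by simp

/-- **One-step potential increase (Lemma 12).** Let `A_1, …, A_n` be symmetric with
`‖A_i‖_op ≤ 1`, let `ε, δ > 0` with `ε δ n ≤ 1`, set `W = exp(ε ∑ i, c_i A_i)`, and let `y`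
satisfy `‖y‖_∞ ≤ 1`, `∑ i, y_i (W • A_i) = 0` and `W • (∑ i, y_i A_i)² ≤ 16 Tr[W]`. Then
`Tr[exp(ε ∑ i, (c_i + δ y_i) A_i)] ≤ (1 + 16 ε² δ²) Tr[exp(ε ∑ i, c_i A_i)]`. -/
theorem stmt_11 (m n : ℕ) (A : Fin n → Matrix (Fin m) (Fin m) ℝ)
    (hsymm : ∀ i, (A i).IsSymm) (hop : ∀ i, matrixOpNorm (A i) ≤ 1)
    (c : Fin n → ℝ) (ε δ : ℝ) (hε : 0 < ε) (hδ : 0 < δ) (hεδ : ε * δ * n ≤ 1)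
    (W : Matrix (Fin m) (Fin m) ℝ)
    (hW : W = NormedSpace.exp (ε • ∑ i, c i • A i))
    (y : Fin n → ℝ) (hy : ∀ i, |y i| ≤ 1)
    (horth : ∑ i, y i * frob W (A i) = 0)
    (hquad : frob W ((∑ i, y i • A i) ^ 2) ≤ 16 * W.trace) :
    (NormedSpace.exp (ε • ∑ i, (c i + δ * y i) • A i)).trace ≤
      (1 + 16 * ε ^ 2 * δ ^ 2) * (NormedSpace.exp (ε • ∑ i, c i • A i)).trace := by
  set Y := ∑ i, y i • A i with hY
  have hsplit : ε • ∑ i, (c i + δ * y i) • A i = ε • ∑ i, c i • A i + (ε * δ) • Y := by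
    simp only [hY, add_smul, Finset.sum_add_distrib, smul_add, Finset.smul_sum, smul_smul,
      mul_assoc]
  have hnorm : matrixOpNorm ((ε * δ) • Y) ≤ 1 := by
    rw [matrixOpNorm_smul, abs_of_pos (mul_pos hε hδ)]
    calc ε * δ * matrixOpNorm Y ≤ ε * δ * n := by
          gcongr; simpa using matrixOpNorm_sum_smul_le_card hop hy
      _ ≤ 1 := hεδ
  have hlin : (W * ((ε * δ) • Y)).trace = 0 := by
    simp only [hY, mul_smul_comm, trace_smul, Finset.mul_sum, trace_sum, smul_eq_mul,
      ← frob_eq_trace_mul W (hsymm _), horth, mul_zero]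
  have hsq : (W * ((ε * δ) • Y) ^ 2).trace ≤ (ε * δ) ^ 2 * (16 * W.trace) := by
    rw [smul_pow, mul_smul_comm, trace_smul, smul_eq_mul,
      ← frob_eq_trace_mul W ((isSymm_sum_smul _ hsymm y).pow 2)]
    exact mul_le_mul_of_nonneg_left hquad (sq_nonneg _)
  have key := trace_exp_add_le_of_norm_le_one ((isSymm_sum_smul .univ hsymm c).smul ε)
    ((isSymm_sum_smul _ hsymm y).smul (ε * δ)) hnorm
  rw [← hW, ← hsplit] at key
  rw [← hW]
  linarith
end

section
/- Let A, B ∈ ℝ^{m×n} be matrices with |B_{ij}| ≤ |A_{ij}| for all i ∈ {1,…,m} and j ∈ {1,…,n}, let w_1, …, w_m ≥ 0 be nonnegative weights, and let k be a positive integer. Then there exists a linear subspace U ⊆ ℝ^n with dim(U) ≥ (1 − 1/k)·n such that for all y ∈ U one has ∑_{i=1}^m w_i·⟨B_i, y⟩² ≤ k·∑_{i=1}^m w_i·∑_{j=1}^n A_{ij}² y_j², where A_i, B_i denote the i-th rows of A and B. -/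
/-!
Put `D_j = ∑ᵢ wᵢ A_{ij}²` and rescale coordinates by `z_j = √D_j y_j`. The form
`y ↦ ∑ᵢ wᵢ ⟨Bᵢ, y⟩²` becomes `z ↦ zᵀ C z` for a positive semidefinite `C` whose diagonal
entries are at most `1` (because `|B_{ij}| ≤ |A_{ij}|`), so `tr C ≤ n`. Hence at most `n / k`
eigenvalues of `C` exceed `k`, and on the orthogonal complement of their eigenvectors
`zᵀ C z ≤ k ‖z‖² = k ∑ⱼ D_j y_j²`.
-/

open Matrix Finset Module

theorem Submodule.finrank_add_finrank_le_finrank_comap_add {K E F : Type*} [Field K]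
    [AddCommGroup E] [Module K E] [AddCommGroup F] [Module K F]
    [FiniteDimensional K E] [FiniteDimensional K F] (f : E →ₗ[K] F) (V : Submodule K F) :
    finrank K V + finrank K E ≤ finrank K (V.comap f) + finrank K F := by
  have h1 := (V.mkQ ∘ₗ f).finrank_range_add_finrank_ker
  have h2 := V.finrank_quotient_add_finrank
  have h3 := (V.mkQ ∘ₗ f).range.finrank_le
  rw [LinearMap.ker_comp, Submodule.ker_mkQ] at h1
  omega

section

variable {ι : Type*} [Fintype ι] [DecidableEq ι]

theorem Matrix.mulVec_dotProduct_mulVec_self_of_mem_unitaryGroup {U : Matrix ι ι ℝ}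
    (hU : U ∈ Matrix.unitaryGroup ι ℝ) (x : ι → ℝ) :
    (U *ᵥ x) ⬝ᵥ (U *ᵥ x) = x ⬝ᵥ x := by
  rw [dotProduct_comm, dotProduct_mulVec, ← mulVec_transpose, mulVec_mulVec,
    ← conjTranspose_eq_transpose_of_trivial, ← star_eq_conjTranspose,
    Matrix.mem_unitaryGroup_iff'.mp hU, one_mulVec]

theorem Matrix.IsHermitian.dotProduct_mulVec_eq_sum_eigenvalues {A : Matrix ι ι ℝ}
    (hA : A.IsHermitian) (x : ι → ℝ) :
    x ⬝ᵥ A *ᵥ x =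
      ∑ i, hA.eigenvalues i * ((star (hA.eigenvectorUnitary : Matrix ι ι ℝ)) *ᵥ x) i ^ 2 := by
  conv_lhs => rw [hA.spectral_theorem, Unitary.conjStarAlgAut_apply]
  rw [← mulVec_mulVec, ← mulVec_mulVec, dotProduct_mulVec, ← mulVec_transpose,
    ← conjTranspose_eq_transpose_of_trivial, ← star_eq_conjTranspose]
  simp only [dotProduct, mulVec_diagonal, Function.comp_apply, RCLike.ofReal_real_eq_id, id]
  exact sum_congr rfl fun i _ => by ring

theorem Matrix.PosSemidef.exists_subspace_dotProduct_mulVec_le {C : Matrix ι ι ℝ}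
    (hC : C.PosSemidef) {r : ℝ} (hr : 0 < r) :
    ∃ V : Submodule ℝ (ι → ℝ), (Fintype.card ι : ℝ) - C.trace / r ≤ finrank ℝ V ∧
      ∀ x ∈ V, x ⬝ᵥ C *ᵥ x ≤ r * (x ⬝ᵥ x) := by
  set μ := hC.1.eigenvalues
  set P : Matrix ι ι ℝ := star (hC.1.eigenvectorUnitary : Matrix ι ι ℝ)
  set large := univ.filter fun i => r < μ i
  have hlarge : r * #large ≤ C.trace := by
    calc r * #large = ∑ _i ∈ large, r := by rw [sum_const, nsmul_eq_mul, mul_comm]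
      _ ≤ ∑ i ∈ large, μ i := sum_le_sum fun i hi => (mem_filter.mp hi).2.le
      _ ≤ ∑ i, μ i := sum_le_sum_of_subset_of_nonneg (subset_univ _)
          fun i _ _ => hC.eigenvalues_nonneg i
      _ = C.trace := by simp [hC.1.trace_eq_sum_eigenvalues, μ]
  set Φ : (ι → ℝ) →ₗ[ℝ] (large → ℝ) :=
    LinearMap.pi fun i => LinearMap.proj (i : ι) ∘ₗ P.mulVecLin
  refine ⟨LinearMap.ker Φ, ?_, fun x hx => ?_⟩
  · have hrank := Φ.finrank_range_add_finrank_ker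
    have hrange : finrank ℝ (LinearMap.range Φ) ≤ #large := by
      simpa using (LinearMap.range Φ).finrank_le
    rw [Module.finrank_fintype_fun_eq_card] at hrank
    have : (#large : ℝ) ≤ C.trace / r := by rw [le_div_iff₀ hr]; linarith
    have : (Fintype.card ι : ℝ) ≤ #large + finrank ℝ (LinearMap.ker Φ) := by
      exact_mod_cast hrank ▸ Nat.add_le_add_right hrange _
    linarith
  · have hzero : ∀ i ∈ large, (P *ᵥ x) i = 0 := fun i hi => congrFun hx ⟨i, hi⟩
    have hquad : x ⬝ᵥ C *ᵥ x = ∑ i, μ i * (P *ᵥ x) i ^ 2 :=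
      hC.1.dotProduct_mulVec_eq_sum_eigenvalues x
    have hnorm : (P *ᵥ x) ⬝ᵥ (P *ᵥ x) = x ⬝ᵥ x :=
      mulVec_dotProduct_mulVec_self_of_mem_unitaryGroup
        (Unitary.star_mem hC.1.eigenvectorUnitary.2) x
    rw [hquad, ← hnorm, dotProduct, mul_sum]
    refine sum_le_sum fun i _ => ?_
    by_cases hi : i ∈ large
    · simp [hzero i hi]
    · rw [← sq]
      exact mul_le_mul_of_nonneg_right (by simpa [large] using hi) (sq_nonneg _)

theorem exists_subspace_mulVec_dotProduct_le_of_sum_sq_le {κ : Type*} [Fintype κ]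
    (b : Matrix κ ι ℝ) (d : ι → ℝ) (hb : ∀ j, ∑ i, b i j ^ 2 ≤ d j) {r : ℝ} (hr : 0 < r) :
    ∃ U : Submodule ℝ (ι → ℝ), (Fintype.card ι : ℝ) - Fintype.card ι / r ≤ finrank ℝ U ∧
      ∀ y ∈ U, (b *ᵥ y) ⬝ᵥ (b *ᵥ y) ≤ r * ∑ j, d j * y j ^ 2 := by
  have hd : ∀ j, 0 ≤ d j := fun j => (sum_nonneg fun i _ => sq_nonneg (b i j)).trans (hb j)
  set s : ι → ℝ := fun j => √(d j)
  -- Where `d j = 0` the column `j` of `b` vanishes, so the junk value `(√0)⁻¹ = 0` is harmless.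
  have hcol : b * diagonal (fun j => (s j)⁻¹ * s j) = b := by
    ext i j
    rw [mul_diagonal]
    rcases (hd j).eq_or_lt with hdj | hdj
    · have hsum : ∑ i, b i j ^ 2 = 0 :=
        le_antisymm (hdj ▸ hb j) (sum_nonneg fun i _ => sq_nonneg _)
      have : b i j = 0 := pow_eq_zero_iff two_ne_zero |>.mp <|
        (sum_eq_zero_iff_of_nonneg fun i _ => sq_nonneg (b i j)).mp hsum i (mem_univ i)
      simp [this]
    · simp [s, (Real.sqrt_pos.mpr hdj).ne']
  set b' := b * diagonal (fun j => (s j)⁻¹)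
  have htrace : (b'ᴴ * b').trace ≤ Fintype.card ι := by
    have hcol' : ∀ j, ∑ i, b' i j ^ 2 ≤ 1 := by
      intro j
      simp only [b', mul_diagonal, mul_pow, ← sum_mul, inv_pow, s, Real.sq_sqrt (hd j)]
      exact mul_inv_le_one_of_le₀ (hb j) (hd j)
    calc (b'ᴴ * b').trace = ∑ j, ∑ i, b' i j ^ 2 := by simp [trace, mul_apply, sq]
      _ ≤ ∑ _j : ι, (1 : ℝ) := sum_le_sum fun j _ => hcol' j
      _ = Fintype.card ι := by simp
  obtain ⟨V, hVdim, hV⟩ :=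
    (posSemidef_conjTranspose_mul_self b').exists_subspace_dotProduct_mulVec_le hr
  refine ⟨V.comap (diagonal s).mulVecLin, ?_, fun y hy => ?_⟩
  · have := Submodule.finrank_add_finrank_le_finrank_comap_add (diagonal s).mulVecLin V
    have : (b'ᴴ * b').trace / r ≤ Fintype.card ι / r := by gcongr
    have : (finrank ℝ V : ℝ) ≤ finrank ℝ (V.comap (diagonal s).mulVecLin) := by
      exact_mod_cast (by omega)
    linarith
  · have hby : b' *ᵥ (diagonal s *ᵥ y) = b *ᵥ y := by
      simp only [b']
      rw [mulVec_mulVec, Matrix.mul_assoc, diagonal_mul_diagonal, hcol]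
    have hnorm : (diagonal s *ᵥ y) ⬝ᵥ (diagonal s *ᵥ y) = ∑ j, d j * y j ^ 2 := by
      simp only [dotProduct, mulVec_diagonal, s]
      exact sum_congr rfl fun j _ => by rw [mul_mul_mul_comm, Real.mul_self_sqrt (hd j), sq]
    have := hV (diagonal s *ᵥ y) hy
    rwa [conjTranspose_eq_transpose_of_trivial, ← mulVec_mulVec, dotProduct_mulVec,
      vecMul_transpose, hby, hnorm] at this

end

/-- **Lemma 16.** Let `A, B ∈ ℝ^{m×n}` with `|B_{ij}| ≤ |A_{ij}|` entrywise, let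
`w_1, …, w_m ≥ 0` and let `k` be a positive integer. Then there is a subspace `U ⊆ ℝ^n` of
dimension at least `(1 - 1/k) n` such that
`∑ i, w_i ⟨B_i, y⟩² ≤ k ∑ i, w_i ∑ j, A_{ij}² y_j²` for all `y ∈ U`. -/
theorem stmt_12 (m n : ℕ) (A B : Matrix (Fin m) (Fin n) ℝ)
    (hAB : ∀ i j, |B i j| ≤ |A i j|)
    (w : Fin m → ℝ) (hw : ∀ i, 0 ≤ w i)
    (k : ℕ) (hk : 0 < k) :
    ∃ U : Submodule ℝ (Fin n → ℝ),
      (1 - 1 / (k : ℝ)) * (n : ℝ) ≤ (Module.finrank ℝ U : ℝ) ∧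
      ∀ y ∈ U,
        ∑ i, w i * (∑ j, B i j * y j) ^ 2 ≤
          (k : ℝ) * ∑ i, w i * ∑ j, (A i j) ^ 2 * (y j) ^ 2 := by
  set b : Matrix (Fin m) (Fin n) ℝ := Matrix.of fun i j => √(w i) * B i j
  have hb : ∀ j, ∑ i, b i j ^ 2 ≤ ∑ i, w i * A i j ^ 2 := fun j => sum_le_sum fun i _ => by
    simp only [b, of_apply, mul_pow, Real.sq_sqrt (hw i)]
    exact mul_le_mul_of_nonneg_left (sq_le_sq.mpr (hAB i j)) (hw i)
  obtain ⟨U, hdim, hU⟩ :=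
    exists_subspace_mulVec_dotProduct_le_of_sum_sq_le b _ hb (Nat.cast_pos.mpr hk)
  refine ⟨U, ?_, fun y hy => ?_⟩
  · rw [Fintype.card_fin] at hdim
    linarith [show (1 - 1 / (k : ℝ)) * n = n - n / k by ring]
  have hlhs : (b *ᵥ y) ⬝ᵥ (b *ᵥ y) = ∑ i, w i * (∑ j, B i j * y j) ^ 2 := by
    refine sum_congr rfl fun i _ => ?_
    simp only [b, mulVec, dotProduct, of_apply, mul_assoc, ← mul_sum, ← sq, mul_pow,
      Real.sq_sqrt (hw i)]
  have hrhs : ∑ j, (∑ i, w i * A i j ^ 2) * y j ^ 2 = ∑ i, w i * ∑ j, A i j ^ 2 * y j ^ 2 := by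
    simp only [sum_mul, mul_sum, mul_assoc]
    exact sum_comm
  rw [← hlhs, ← hrhs]
  exact hU y hy
end
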